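/- arXiv:0905.3646 — 8 statements merged into one kernel-verified Lean document; each statement's English description precedes it below -/
import Mathlib

section
/- The product numerical range of any operator A on ℂ^K ⊗ ℂ^M contains the barycenter of its spectrum: (1/(KM))·Tr(A) ∈ Λ⊗(A). -/
open Matrix Kronecker
open scoped Pointwise ComplexOrder

noncomputable section

/-- A product (separable) vector `x ⊗ y` in `ℂ^K ⊗ ℂ^M`. -/
def prodVec {K M : ℕ} (x : Fin K → ℂ) (y : Fin M → ℂ) : Fin K × Fin M → ℂ :=
  fun p => x p.1 * y p.2

/-- Product numerical range of an operator on `ℂ^K ⊗ ℂ^M`. -/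
def pnr {K M : ℕ} (X : Matrix (Fin K × Fin M) (Fin K × Fin M) ℂ) : Set ℂ :=
  {z | ∃ x : Fin K → ℂ, ∃ y : Fin M → ℂ,
    star x ⬝ᵥ x = 1 ∧ star y ⬝ᵥ y = 1 ∧
    star (prodVec x y) ⬝ᵥ (X *ᵥ prodVec x y) = z}

/-- Product numerical range viewed as a set of real numbers (for Hermitian operators). -/
def pnrR {K M : ℕ} (X : Matrix (Fin K × Fin M) (Fin K × Fin M) ℂ) : Set ℝ :=
  {r | ∃ x : Fin K → ℂ, ∃ y : Fin M → ℂ,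
    star x ⬝ᵥ x = 1 ∧ star y ⬝ᵥ y = 1 ∧
    star (prodVec x y) ⬝ᵥ (X *ᵥ prodVec x y) = (r : ℂ)}

/-- Standard numerical range of an operator on `ℂ^K`. -/
def nr {K : ℕ} (A : Matrix (Fin K) (Fin K) ℂ) : Set ℂ :=
  {z | ∃ ψ : Fin K → ℂ, star ψ ⬝ᵥ ψ = 1 ∧ star ψ ⬝ᵥ (A *ᵥ ψ) = z}

/-! The numerical range of a single matrix is convex (Toeplitz–Hausdorff). After an affine change
of `A` one may take unit vectors `x, y` with `⟨x, A x⟩ = 0` and `⟨y, A y⟩ = 1`; a phase rotation of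
`x` makes the Rayleigh quotient real along the segment from `x` to `y`, and the intermediate value
theorem then covers `[0, 1]`. By convexity the range contains the mean `Tr A / n` of the diagonal
entries.

For the product range, pick `y` with `⟨y, C y⟩ = Tr C / M` for the partial trace `C = Tr₁ A`, then
`x` with `⟨x, B x⟩ = Tr B / K` for `B = ⟨y| A |y⟩`. Since `Tr B = ⟨y, C y⟩`, `Tr C = Tr A` and
`⟨x ⊗ y, A (x ⊗ y)⟩ = ⟨x, B x⟩`, the product vector `x ⊗ y` realises `Tr A / (K M)`. -/

open Complex

section QuadraticForm

variable {ι : Type*} [Fintype ι]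

theorem star_smul_dotProduct_smul (c : ℂ) (v w : ι → ℂ) :
    star (c • v) ⬝ᵥ (c • w) = star c * c * (star v ⬝ᵥ w) := by
  rw [star_smul, smul_dotProduct, dotProduct_smul, smul_eq_mul, smul_eq_mul]
  ring

theorem im_star_dotProduct_self (v : ι → ℂ) : (star v ⬝ᵥ v).im = 0 :=
  (nonneg_iff.mp (dotProduct_star_self_nonneg v)).2.symm

theorem star_dotProduct_mulVec_real_combination (A : Matrix ι ι ℂ) (a b : ℝ) (x y : ι → ℂ) :
    star ((a : ℂ) • x + (b : ℂ) • y) ⬝ᵥ (A *ᵥ ((a : ℂ) • x + (b : ℂ) • y)) =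
      a ^ 2 * (star x ⬝ᵥ (A *ᵥ x)) + a * b * (star x ⬝ᵥ (A *ᵥ y) + star y ⬝ᵥ (A *ᵥ x))
        + b ^ 2 * (star y ⬝ᵥ (A *ᵥ y)) := by
  simp only [star_add, star_smul, mulVec_add, mulVec_smul, dotProduct_add, add_dotProduct,
    dotProduct_smul, smul_dotProduct, smul_eq_mul, Complex.star_def, Complex.conj_ofReal]
  ring

theorem star_dotProduct_smul_sub_one_mulVec [DecidableEq ι] (A : Matrix ι ι ℂ) (c w : ℂ)
    {ψ : ι → ℂ} (hψ : star ψ ⬝ᵥ ψ = 1) :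
    star ψ ⬝ᵥ ((c • (A - w • 1)) *ᵥ ψ) = c * (star ψ ⬝ᵥ (A *ᵥ ψ) - w) := by
  simp only [smul_mulVec, sub_mulVec, one_mulVec, dotProduct_smul, dotProduct_sub,
    smul_eq_mul, hψ, mul_one]

theorem eq_zero_of_smul_add_smul_eq_zero (A : Matrix ι ι ℂ) {x y : ι → ℂ} {a b : ℂ}
    (hx : star x ⬝ᵥ (A *ᵥ x) = 0) (hy : star y ⬝ᵥ (A *ᵥ y) = 1) (h : a • x + b • y = 0) :
    b = 0 := by
  have hxy : a • x = (-b) • y := by rw [neg_smul]; exact eq_neg_of_add_eq_zero_left h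
  have := congrArg (fun v => star v ⬝ᵥ (A *ᵥ v)) hxy
  simp only [mulVec_smul, star_smul_dotProduct_smul, hx, hy] at this
  simpa using this.symm

end QuadraticForm

theorem exists_star_mul_self_eq_one_im_eq_zero (α β : ℂ) :
    ∃ u : ℂ, star u * u = 1 ∧ (star u * α + u * β).im = 0 := by
  set d := α - star β
  set u := exp (arg d * I)
  have hu : star u * u = 1 := by
    rw [Complex.star_def, conj_mul', norm_exp_ofReal_mul_I, ofReal_one, one_pow]
  refine ⟨u, hu, ?_⟩
  have hd : star u * d = ‖d‖ := by
    conv_lhs => rw [← norm_mul_exp_arg_mul_I d]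
    rw [mul_left_comm, hu, mul_one]
  have : star u * α + u * β = star u * d + (star (u * β) + u * β) := by
    simp only [d, star_mul', Complex.star_def]; ring
  rw [this, hd, Complex.star_def, add_im, add_im, conj_im, ofReal_im]
  ring

section NumericalRange

variable {n : ℕ}

theorem div_mem_nr (A : Matrix (Fin n) (Fin n) ℂ) {ψ : Fin n → ℂ} (hψ : ψ ≠ 0) :
    star ψ ⬝ᵥ (A *ᵥ ψ) / (star ψ ⬝ᵥ ψ) ∈ nr A := by
  set N := star ψ ⬝ᵥ ψ
  have hN : 0 < N := dotProduct_star_self_pos_iff.mpr hψ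
  set c : ℂ := (((√N.re)⁻¹ : ℝ) : ℂ)
  have hc : star c * c = N⁻¹ := by
    rw [Complex.star_def, conj_ofReal, ← ofReal_mul, ← mul_inv,
      Real.mul_self_sqrt (pos_iff.mp hN).1.le, ofReal_inv]
    congr
    exact Complex.ext rfl (im_star_dotProduct_self ψ).symm
  refine ⟨c • ψ, ?_, ?_⟩
  · rw [star_smul_dotProduct_smul, hc, inv_mul_cancel₀ hN.ne']
  · rw [mulVec_smul, star_smul_dotProduct_smul, hc, div_eq_inv_mul]

theorem ofReal_mem_nr_of_zero_mem_of_one_mem {A : Matrix (Fin n) (Fin n) ℂ} (h0 : 0 ∈ nr A)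
    (h1 : 1 ∈ nr A) {t : ℝ} (ht : t ∈ Set.Icc 0 1) : (t : ℂ) ∈ nr A := by
  obtain ⟨x, hx, hAx⟩ := h0
  obtain ⟨y, hy, hAy⟩ := h1
  obtain ⟨u, hu, hreal⟩ :=
    exists_star_mul_self_eq_one_im_eq_zero (star x ⬝ᵥ (A *ᵥ y)) (star y ⬝ᵥ (A *ᵥ x))
  set x' := u • x
  have hx' : star x' ⬝ᵥ x' = 1 := by rw [star_smul_dotProduct_smul, hu, hx, one_mul]
  have hAx' : star x' ⬝ᵥ (A *ᵥ x') = 0 := by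
    rw [mulVec_smul, star_smul_dotProduct_smul, hAx, mul_zero]
  have hcross : (star x' ⬝ᵥ (A *ᵥ y) + star y ⬝ᵥ (A *ᵥ x')).im = 0 := by
    simpa only [x', star_smul, smul_dotProduct, mulVec_smul, dotProduct_smul, smul_eq_mul]
      using hreal
  set ψ : ℝ → Fin n → ℂ := fun s => ((1 - s : ℝ) : ℂ) • x' + (s : ℂ) • y
  have hψ : ∀ s, ψ s ≠ 0 := by
    intro s hs
    have hs0 : s = 0 := by exact_mod_cast eq_zero_of_smul_add_smul_eq_zero A hAx' hAy hs
    have : x' = 0 := by simpa [ψ, hs0] using hs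
    simp [this] at hx'
  have him : ∀ s, (star (ψ s) ⬝ᵥ (A *ᵥ ψ s)).im = 0 := by
    intro s
    rw [star_dotProduct_mulVec_real_combination, hAx', hAy]
    simp [hcross, sq]
  set f : ℝ → ℂ := fun s => star (ψ s) ⬝ᵥ (A *ᵥ ψ s) / (star (ψ s) ⬝ᵥ ψ s)
  have hf : Continuous f :=
    Continuous.div (by fun_prop) (by fun_prop) fun s => dotProduct_star_self_eq_zero.not.mpr (hψ s)
  have hf0 : f 0 = 0 := by simp [f, ψ, hAx']
  have hf1 : f 1 = 1 := by simp [f, ψ, hAy, hy]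
  obtain ⟨s, -, hs⟩ := intermediate_value_Icc zero_le_one (continuous_re.comp hf).continuousOn
    (by simpa [hf0, hf1] using ht)
  have hfs : f s = t := Complex.ext hs (by simp [f, div_im, him, im_star_dotProduct_self])
  exact hfs ▸ div_mem_nr A (hψ s)

theorem convex_nr (A : Matrix (Fin n) (Fin n) ℂ) : Convex ℝ (nr A) := by
  intro z₁ h₁ z₂ h₂ a b ha hb hab
  rcases eq_or_ne z₁ z₂ with rfl | hne
  · rwa [← add_smul, hab, one_smul]
  set A' := (z₂ - z₁)⁻¹ • (A - z₁ • 1)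
  have hA' : ∀ ψ, star ψ ⬝ᵥ ψ = 1 →
      star ψ ⬝ᵥ (A' *ᵥ ψ) = (z₂ - z₁)⁻¹ * (star ψ ⬝ᵥ (A *ᵥ ψ) - z₁) :=
    fun ψ hψ => star_dotProduct_smul_sub_one_mulVec A _ _ hψ
  have h0 : 0 ∈ nr A' := by
    obtain ⟨x, hx, rfl⟩ := h₁
    exact ⟨x, hx, by rw [hA' x hx, sub_self, mul_zero]⟩
  have h1 : 1 ∈ nr A' := by
    obtain ⟨y, hy, rfl⟩ := h₂
    exact ⟨y, hy, by rw [hA' y hy, inv_mul_cancel₀ (sub_ne_zero.mpr hne.symm)]⟩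
  obtain ⟨ψ, hψ, hAψ⟩ := ofReal_mem_nr_of_zero_mem_of_one_mem h0 h1 ⟨hb, by linarith⟩
  refine ⟨ψ, hψ, ?_⟩
  rw [hA' ψ hψ, inv_mul_eq_iff_eq_mul₀ (sub_ne_zero.mpr hne.symm)] at hAψ
  rw [sub_eq_iff_eq_add.mp hAψ, Complex.real_smul, Complex.real_smul, eq_sub_of_add_eq hab]
  push_cast
  ring

theorem inv_natCast_mul_trace_mem_nr (hn : 0 < n) (A : Matrix (Fin n) (Fin n) ℂ) :
    (n : ℂ)⁻¹ * A.trace ∈ nr A := by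
  have hdiag : ∀ i, A i i ∈ nr A := fun i => ⟨Pi.single i 1, by simp, by simp⟩
  have := (convex_nr A).centerMass_mem (t := Finset.univ) (w := fun _ => (1 : ℝ)) (by simp)
    (by simp [hn]) fun i _ => hdiag i
  simpa [Finset.centerMass, Matrix.trace, Finset.mul_sum] using this

end NumericalRange

namespace Matrix

variable {ι κ R : Type*} [Fintype ι] [Fintype κ]

def partialTraceFst [AddCommMonoid R] (A : Matrix (ι × κ) (ι × κ) R) : Matrix κ κ R :=
  fun j j' => ∑ i, A (i, j) (i, j')

-- `compressSnd A y` is `(1 ⊗ y)ᴴ A (1 ⊗ y)`: pairing the second tensor factor with `y`.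
def compressSnd [Semiring R] [Star R] (A : Matrix (ι × κ) (ι × κ) R) (y : κ → R) :
    Matrix ι ι R :=
  fun i i' => ∑ j, ∑ j', star (y j) * A (i, j) (i', j') * y j'

theorem trace_partialTraceFst [AddCommMonoid R] (A : Matrix (ι × κ) (ι × κ) R) :
    (partialTraceFst A).trace = A.trace := by
  simp only [trace, diag, partialTraceFst, Fintype.sum_prod_type]
  exact Finset.sum_comm

theorem trace_compressSnd [Semiring R] [Star R] (A : Matrix (ι × κ) (ι × κ) R) (y : κ → R) :
    (compressSnd A y).trace = star y ⬝ᵥ (partialTraceFst A *ᵥ y) := by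
  simp only [trace, diag, compressSnd, partialTraceFst, dotProduct, mulVec, Pi.star_apply,
    Finset.mul_sum, Finset.sum_mul, mul_assoc]
  rw [Finset.sum_comm]
  exact Finset.sum_congr rfl fun j _ => Finset.sum_comm

end Matrix

theorem star_prodVec_dotProduct_mulVec {K M : ℕ} (A : Matrix (Fin K × Fin M) (Fin K × Fin M) ℂ)
    (x : Fin K → ℂ) (y : Fin M → ℂ) :
    star (prodVec x y) ⬝ᵥ (A *ᵥ prodVec x y) = star x ⬝ᵥ (A.compressSnd y *ᵥ x) := by
  simp only [prodVec, compressSnd, dotProduct, mulVec, Pi.star_apply, Fintype.sum_prod_type,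
    Finset.mul_sum, Finset.sum_mul, star_mul']
  refine Finset.sum_congr rfl fun i _ => ?_
  rw [Finset.sum_comm]
  exact Finset.sum_congr rfl fun i' _ => Finset.sum_congr rfl fun j _ =>
    Finset.sum_congr rfl fun j' _ => by ring

/-- The product numerical range contains the barycenter of the spectrum. -/
theorem pnr_mem_barycenter {K M : ℕ} (hK : 0 < K) (hM : 0 < M)
    (A : Matrix (Fin K × Fin M) (Fin K × Fin M) ℂ) :
    ((K * M : ℕ) : ℂ)⁻¹ * A.trace ∈ pnr A := by
  obtain ⟨y, hy, hCy⟩ := inv_natCast_mul_trace_mem_nr hM A.partialTraceFst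
  obtain ⟨x, hx, hBx⟩ := inv_natCast_mul_trace_mem_nr hK (A.compressSnd y)
  refine ⟨x, y, hx, hy, ?_⟩
  rw [star_prodVec_dotProduct_mulVec, hBx, trace_compressSnd, hCy, trace_partialTraceFst]
  push_cast
  ring
end
end

section
/- The product numerical range of a Hermitian operator X on ℂ^K ⊗ ℂ^M is a closed real interval [λ⊗_min, λ⊗_max], where λ⊗_min and λ⊗_max are the minimum and maximum of ⟨ψ_A ⊗ ψ_B, X(ψ_A ⊗ ψ_B)⟩ over normalized product vectors. -/
open Matrix Kronecker
open scoped Pointwise ComplexOrder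

noncomputable section

/-!
For Hermitian `X` the product expectation value `⟨x ⊗ y, X (x ⊗ y)⟩` is real, so `pnrR X` is the
image of the product of two unit spheres under a continuous real function. The unit sphere of
`ℂ^K`, `K ≥ 1`, is compact and connected (it sits in a real space of dimension `2K ≥ 2`), so the
image is a compact connected subset of `ℝ`: the closed interval between its infimum and supremum.
-/

namespace Matrix

variable {n : Type*} [Fintype n]

variable (n) in
def unitVectors : Set (n → ℂ) := {x | star x ⬝ᵥ x = 1}

lemma star_dotProduct_self_ofLp (x : EuclideanSpace ℂ n) :
    star x.ofLp ⬝ᵥ x.ofLp = ((‖x‖ ^ 2 : ℝ) : ℂ) := by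
  rw [dotProduct_comm, ← EuclideanSpace.inner_eq_star_dotProduct, inner_self_eq_norm_sq_to_K]
  push_cast; rfl

lemma unitVectors_eq_image_sphere :
    unitVectors n = WithLp.ofLp '' Metric.sphere (0 : EuclideanSpace ℂ n) 1 := by
  have key (x : EuclideanSpace ℂ n) : x.ofLp ∈ unitVectors n ↔ x ∈ Metric.sphere 0 1 := by
    rw [unitVectors, Set.mem_ofPred_eq, star_dotProduct_self_ofLp, mem_sphere_zero_iff_norm,
      Complex.ofReal_eq_one, pow_eq_one_iff_of_nonneg (norm_nonneg x) two_ne_zero]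
  ext x
  exact ⟨fun hx => ⟨WithLp.toLp 2 x, (key _).1 hx, rfl⟩, by rintro ⟨y, hy, rfl⟩; exact (key y).2 hy⟩

lemma isCompact_unitVectors : IsCompact (unitVectors n) := by
  rw [unitVectors_eq_image_sphere]
  exact (isCompact_sphere 0 1).image (PiLp.continuous_ofLp 2 _)

lemma one_lt_rank_real_euclideanSpace [Nonempty n] :
    1 < Module.rank ℝ (EuclideanSpace ℂ n) := by
  have h := Module.finrank_mul_finrank ℝ ℂ (EuclideanSpace ℂ n)
  rw [Complex.finrank_real_complex, finrank_euclideanSpace] at h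
  have := Fintype.card_pos (α := n)
  rw [← Module.finrank_eq_rank]
  exact_mod_cast (show 1 < Module.finrank ℝ (EuclideanSpace ℂ n) by omega)

lemma isConnected_unitVectors [Nonempty n] : IsConnected (unitVectors n) := by
  rw [unitVectors_eq_image_sphere]
  exact (isConnected_sphere one_lt_rank_real_euclideanSpace 0 zero_le_one).image _
    (PiLp.continuous_ofLp 2 _).continuousOn

lemma IsHermitian.ofReal_re_star_dotProduct_mulVec_self {X : Matrix n n ℂ} (hX : X.IsHermitian)
    (v : n → ℂ) : ((star v ⬝ᵥ X *ᵥ v).re : ℂ) = star v ⬝ᵥ X *ᵥ v :=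
  Complex.ext rfl (by simpa using (hX.im_star_dotProduct_mulVec_self v).symm)

lemma continuous_star_dotProduct_mulVec_self {R : Type*} [TopologicalSpace R]
    [NonUnitalNonAssocSemiring R] [Star R] [ContinuousStar R] [IsTopologicalSemiring R]
    (X : Matrix n n R) : Continuous fun v : n → R => star v ⬝ᵥ X *ᵥ v :=
  continuous_star.dotProduct (continuous_const.matrix_mulVec continuous_id)

end Matrix

lemma continuous_prodVec {K M : ℕ} :
    Continuous fun p : (Fin K → ℂ) × (Fin M → ℂ) => prodVec p.1 p.2 := by
  unfold prodVec; fun_prop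

def prodExpectation {K M : ℕ} (X : Matrix (Fin K × Fin M) (Fin K × Fin M) ℂ)
    (p : (Fin K → ℂ) × (Fin M → ℂ)) : ℝ :=
  (star (prodVec p.1 p.2) ⬝ᵥ X *ᵥ prodVec p.1 p.2).re

lemma continuous_prodExpectation {K M : ℕ} (X : Matrix (Fin K × Fin M) (Fin K × Fin M) ℂ) :
    Continuous (prodExpectation X) :=
  Complex.continuous_re.comp ((continuous_star_dotProduct_mulVec_self X).comp continuous_prodVec)

lemma pnrR_eq_image_prodExpectation {K M : ℕ} {X : Matrix (Fin K × Fin M) (Fin K × Fin M) ℂ}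
    (hX : X.IsHermitian) :
    pnrR X = prodExpectation X '' (unitVectors (Fin K) ×ˢ unitVectors (Fin M)) := by
  ext r
  constructor
  · rintro ⟨x, y, hx, hy, hr⟩
    exact ⟨(x, y), ⟨hx, hy⟩, by rw [prodExpectation, hr, Complex.ofReal_re]⟩
  · rintro ⟨⟨x, y⟩, ⟨hx, hy⟩, rfl⟩
    exact ⟨x, y, hx, hy, (hX.ofReal_re_star_dotProduct_mulVec_self _).symm⟩

/-- Product numerical range of a Hermitian operator is a closed interval whose endpoints
are the minimal and maximal product expectation values. -/
theorem pnrR_hermitian_eq_Icc {K M : ℕ} (hK : 0 < K) (hM : 0 < M)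
    (X : Matrix (Fin K × Fin M) (Fin K × Fin M) ℂ) (hX : X.IsHermitian) :
    pnrR X = Set.Icc (sInf (pnrR X)) (sSup (pnrR X)) := by
  have : Nonempty (Fin K) := Fin.pos_iff_nonempty.mp hK
  have : Nonempty (Fin M) := Fin.pos_iff_nonempty.mp hM
  have hcont := continuous_prodExpectation X
  rw [pnrR_eq_image_prodExpectation hX]
  exact eq_Icc_of_connected_compact
    ((isConnected_unitVectors.prod isConnected_unitVectors).image _ hcont.continuousOn)
    ((isCompact_unitVectors.prod isCompact_unitVectors).image hcont)
end
end

section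
/- For a Hermitian operator X on ℂ^2 ⊗ ℂ^2 with eigenvalues λ₁ ≤ λ₂ ≤ λ₃ ≤ λ₄, the product numerical range contains the central segment [λ₂, λ₃] of the spectrum. -/
open Matrix Kronecker
open scoped Pointwise ComplexOrder

noncomputable section

/-! Product vectors in `ℂ² ⊗ ℂ²` are the zeros of the quadratic form `z₀₀ z₁₁ - z₀₁ z₁₀`, so every
two-dimensional subspace contains one. Inside the span of the eigenvectors for `λ₁, λ₂` its
Rayleigh quotient is a convex combination of `λ₁` and `λ₂`, hence at most `λ₂`; likewise the span
for `λ₃, λ₄` gives a point at least `λ₃`. For Hermitian `X` the product numerical range is a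
continuous image of a product of two spheres, hence an interval, so it contains `[λ₂, λ₃]`. -/

open Complex

lemma star_dotProduct_self_eq_norm_sq {ι : Type*} [Fintype ι] (x : ι → ℂ) :
    star x ⬝ᵥ x = ((‖WithLp.toLp 2 x‖ ^ 2 : ℝ) : ℂ) := by
  rw [dotProduct_comm, ← EuclideanSpace.inner_toLp_toLp, inner_self_eq_norm_sq_to_K]
  push_cast; rfl

lemma star_dotProduct_self_eq_one_iff {ι : Type*} [Fintype ι] (x : ι → ℂ) :
    star x ⬝ᵥ x = 1 ↔ ‖WithLp.toLp 2 x‖ = 1 := by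
  rw [star_dotProduct_self_eq_norm_sq, ← ofReal_one, ofReal_inj,
    pow_eq_one_iff_of_nonneg (norm_nonneg _) two_ne_zero]

lemma star_prodVec_dotProduct {K M : ℕ} (x x' : Fin K → ℂ) (y y' : Fin M → ℂ) :
    star (prodVec x y) ⬝ᵥ prodVec x' y' = (star x ⬝ᵥ x') * (star y ⬝ᵥ y') := by
  simp only [dotProduct, Fintype.sum_prod_type, Finset.sum_mul_sum, prodVec, Pi.star_apply,
    star_mul']
  refine Finset.sum_congr rfl fun _ _ => Finset.sum_congr rfl fun _ _ => ?_
  ring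

lemma prodVec_smul_smul {K M : ℕ} (a b : ℂ) (x : Fin K → ℂ) (y : Fin M → ℂ) :
    prodVec (a • x) (b • y) = (a * b) • prodVec x y := by
  funext p
  simp only [prodVec, Pi.smul_apply, smul_eq_mul]
  ring

lemma div_mem_pnrR {K M : ℕ} (X : Matrix (Fin K × Fin M) (Fin K × Fin M) ℂ)
    {x : Fin K → ℂ} {y : Fin M → ℂ} {m n : ℝ} (hn0 : n ≠ 0)
    (hn : star (prodVec x y) ⬝ᵥ prodVec x y = n)
    (hm : star (prodVec x y) ⬝ᵥ (X *ᵥ prodVec x y) = m) :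
    m / n ∈ pnrR X := by
  set p := ‖WithLp.toLp 2 x‖
  set q := ‖WithLp.toLp 2 y‖
  have hpq : n = (p * q) ^ 2 := by
    rw [star_prodVec_dotProduct, star_dotProduct_self_eq_norm_sq,
      star_dotProduct_self_eq_norm_sq, ← ofReal_mul, ofReal_inj] at hn
    rw [← hn]; ring
  have hp : p ≠ 0 := fun h => hn0 (by simp [hpq, h])
  have hq : q ≠ 0 := fun h => hn0 (by simp [hpq, h])
  refine ⟨(p : ℂ)⁻¹ • x, (q : ℂ)⁻¹ • y, ?_, ?_, ?_⟩
  · rw [star_dotProduct_self_eq_one_iff, WithLp.toLp_smul]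
    exact norm_smul_inv_norm (norm_ne_zero_iff.mp hp)
  · rw [star_dotProduct_self_eq_one_iff, WithLp.toLp_smul]
    exact norm_smul_inv_norm (norm_ne_zero_iff.mp hq)
  · rw [prodVec_smul_smul, star_smul, smul_dotProduct, mulVec_smul, dotProduct_smul, hm, hpq]
    simp only [RCLike.star_def, map_mul, map_inv₀, conj_ofReal, smul_eq_mul]
    push_cast
    field_simp

lemma isPreconnected_unit_sphere (K : ℕ) :
    IsPreconnected (Metric.sphere (0 : EuclideanSpace ℂ (Fin K)) 1) := by
  rcases K with _ | k
  · convert isPreconnected_empty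
    ext v
    simp [Subsingleton.elim v 0]
  · refine isPreconnected_sphere ?_ 0 1
    rw [← Module.finrank_eq_rank, ← Module.finrank_mul_finrank ℝ ℂ, Complex.finrank_real_complex,
      finrank_euclideanSpace_fin]
    norm_cast
    omega

lemma pnrR_eq_image {K M : ℕ} {X : Matrix (Fin K × Fin M) (Fin K × Fin M) ℂ}
    (hX : X.IsHermitian) :
    pnrR X = (fun p : EuclideanSpace ℂ (Fin K) × EuclideanSpace ℂ (Fin M) =>
        (star (prodVec p.1.ofLp p.2.ofLp) ⬝ᵥ (X *ᵥ prodVec p.1.ofLp p.2.ofLp)).re) ''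
      (Metric.sphere 0 1 ×ˢ Metric.sphere 0 1) := by
  ext r
  simp only [pnrR, Set.mem_ofPred_eq, Set.mem_image, Set.mem_prod, mem_sphere_zero_iff_norm,
    Prod.exists, star_dotProduct_self_eq_one_iff]
  constructor
  · rintro ⟨x, y, hx, hy, hr⟩
    exact ⟨WithLp.toLp 2 x, WithLp.toLp 2 y, ⟨hx, hy⟩, by simp [hr]⟩
  · rintro ⟨v, w, ⟨hv, hw⟩, rfl⟩
    refine ⟨v.ofLp, w.ofLp, hv, hw, Complex.ext rfl ?_⟩
    simpa using hX.im_star_dotProduct_mulVec_self _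

lemma pnrR_ordConnected {K M : ℕ} {X : Matrix (Fin K × Fin M) (Fin K × Fin M) ℂ}
    (hX : X.IsHermitian) : (pnrR X).OrdConnected := by
  rw [pnrR_eq_image hX]
  refine (((isPreconnected_unit_sphere K).prod (isPreconnected_unit_sphere M)).image _
    (Continuous.continuousOn ?_)).ordConnected
  simp only [dotProduct, mulVec, prodVec, Pi.star_apply]
  fun_prop

lemma exists_prodVec_eq_of_det_eq_zero (z : Fin 2 × Fin 2 → ℂ)
    (h : z (0, 0) * z (1, 1) = z (0, 1) * z (1, 0)) : ∃ x y, prodVec x y = z := by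
  have eq_of_entries : ∀ w : Fin 2 × Fin 2 → ℂ, w (0, 0) = z (0, 0) → w (0, 1) = z (0, 1) →
      w (1, 0) = z (1, 0) → w (1, 1) = z (1, 1) → w = z := by
    intro w h00 h01 h10 h11
    ext ⟨i, j⟩
    fin_cases i <;> fin_cases j <;> assumption
  by_cases h00 : z (0, 0) = 0
  · rw [h00, zero_mul, eq_comm, mul_eq_zero] at h
    rcases h with h01 | h10
    · exact ⟨![0, 1], ![z (1, 0), z (1, 1)], eq_of_entries _ (by simp [prodVec, h00])
        (by simp [prodVec, h01]) (by simp [prodVec]) (by simp [prodVec])⟩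
    · exact ⟨![z (0, 1), z (1, 1)], ![0, 1], eq_of_entries _ (by simp [prodVec, h00])
        (by simp [prodVec]) (by simp [prodVec, h10]) (by simp [prodVec])⟩
  · refine ⟨![z (0, 0), z (1, 0)], ![1, z (0, 1) / z (0, 0)], eq_of_entries _ ?_ ?_ ?_ ?_⟩ <;>
      simp only [prodVec, Fin.isValue, cons_val_zero, cons_val_one, mul_one]
    · field_simp
    · field_simp; linear_combination -h

lemma exists_quadratic_form_eq_zero (A B C : ℂ) :
    ∃ a b : ℂ, (a, b) ≠ 0 ∧ A * a ^ 2 + B * (a * b) + C * b ^ 2 = 0 := by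
  by_cases hA : A = 0
  · exact ⟨1, 0, by simp, by simp [hA]⟩
  · obtain ⟨s, hs⟩ := IsAlgClosed.exists_eq_mul_self (discrim A B C)
    obtain ⟨a, ha⟩ := exists_quadratic_eq_zero hA ⟨s, hs⟩
    exact ⟨a, 1, by simp, by linear_combination ha⟩

lemma exists_prodVec_eq_linearCombination (u w : Fin 2 × Fin 2 → ℂ) :
    ∃ a b : ℂ, (a, b) ≠ 0 ∧ ∃ x y, prodVec x y = a • u + b • w := by
  -- the coefficients expand `det (a • u + b • w)` as a binary quadratic form in `(a, b)`
  obtain ⟨a, b, hab, hroot⟩ := exists_quadratic_form_eq_zero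
    (u (0, 0) * u (1, 1) - u (0, 1) * u (1, 0))
    (u (0, 0) * w (1, 1) + w (0, 0) * u (1, 1) - u (0, 1) * w (1, 0) - w (0, 1) * u (1, 0))
    (w (0, 0) * w (1, 1) - w (0, 1) * w (1, 0))
  refine ⟨a, b, hab, exists_prodVec_eq_of_det_eq_zero _ ?_⟩
  simp only [Pi.add_apply, Pi.smul_apply, smul_eq_mul]
  linear_combination hroot

lemma star_dotProduct_of_orthonormal {ι : Type*} [Fintype ι] {u w : ι → ℂ}
    (huu : star u ⬝ᵥ u = 1) (hww : star w ⬝ᵥ w = 1) (huw : star u ⬝ᵥ w = 0) (a b : ℂ)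
    (α β : ℝ) :
    star (a • u + b • w) ⬝ᵥ ((α * a) • u + (β * b) • w)
      = ((normSq a * α + normSq b * β : ℝ) : ℂ) := by
  have hwu : star w ⬝ᵥ u = 0 := by rw [star_dotProduct, huw, star_zero]
  simp only [star_add, star_smul, add_dotProduct, dotProduct_add, smul_dotProduct,
    dotProduct_smul, huu, hww, huw, hwu, smul_eq_mul, mul_one, mul_zero, add_zero, zero_add]
  push_cast
  rw [normSq_eq_conj_mul_self, normSq_eq_conj_mul_self]
  simp only [RCLike.star_def]
  ring

namespace Matrix.IsHermitian

variable {ι : Type*} [Fintype ι] [DecidableEq ι] {X : Matrix ι ι ℂ} (hX : X.IsHermitian)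

lemma star_eigenvectorBasis_dotProduct_self (i : ι) :
    star ⇑(hX.eigenvectorBasis i) ⬝ᵥ ⇑(hX.eigenvectorBasis i) = 1 :=
  (star_dotProduct_self_eq_one_iff _).mpr (hX.eigenvectorBasis.orthonormal.1 i)

lemma star_eigenvectorBasis_dotProduct_of_ne {i j : ι} (hij : i ≠ j) :
    star ⇑(hX.eigenvectorBasis i) ⬝ᵥ ⇑(hX.eigenvectorBasis j) = 0 := by
  rw [dotProduct_comm, ← EuclideanSpace.inner_eq_star_dotProduct]
  exact hX.eigenvectorBasis.orthonormal.2 hij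

variable {i j : ι} {a b : ℂ}

lemma star_dotProduct_self_eigenvector_combination (hij : i ≠ j) :
    star (a • ⇑(hX.eigenvectorBasis i) + b • ⇑(hX.eigenvectorBasis j)) ⬝ᵥ
        (a • ⇑(hX.eigenvectorBasis i) + b • ⇑(hX.eigenvectorBasis j))
      = ((normSq a + normSq b : ℝ) : ℂ) := by
  simpa using star_dotProduct_of_orthonormal (hX.star_eigenvectorBasis_dotProduct_self i)
    (hX.star_eigenvectorBasis_dotProduct_self j)
    (hX.star_eigenvectorBasis_dotProduct_of_ne hij) a b 1 1

lemma star_dotProduct_mulVec_eigenvector_combination (hij : i ≠ j) :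
    star (a • ⇑(hX.eigenvectorBasis i) + b • ⇑(hX.eigenvectorBasis j)) ⬝ᵥ
        (X *ᵥ (a • ⇑(hX.eigenvectorBasis i) + b • ⇑(hX.eigenvectorBasis j)))
      = ((normSq a * hX.eigenvalues i + normSq b * hX.eigenvalues j : ℝ) : ℂ) := by
  rw [← star_dotProduct_of_orthonormal
    (hX.star_eigenvectorBasis_dotProduct_self i)
    (hX.star_eigenvectorBasis_dotProduct_self j)
    (hX.star_eigenvectorBasis_dotProduct_of_ne hij)]
  simp only [mulVec_add, mulVec_smul, mulVec_eigenvectorBasis, ← Complex.real_smul, smul_assoc]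
  rw [smul_comm a, smul_comm b]

end Matrix.IsHermitian

lemma exists_mem_pnrR_mem_segment_eigenvalues {X : Matrix (Fin 2 × Fin 2) (Fin 2 × Fin 2) ℂ}
    (hX : X.IsHermitian) {i j : Fin 2 × Fin 2} (hij : i ≠ j) :
    ∃ r ∈ pnrR X, r ∈ segment ℝ (hX.eigenvalues i) (hX.eigenvalues j) := by
  obtain ⟨a, b, hab, x, y, hxy⟩ :=
    exists_prodVec_eq_linearCombination ⇑(hX.eigenvectorBasis i) ⇑(hX.eigenvectorBasis j)
  have hn : 0 < normSq a + normSq b := by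
    contrapose! hab
    simp only [Prod.mk_eq_zero, ← normSq_eq_zero]
    constructor <;> linarith [normSq_nonneg a, normSq_nonneg b]
  refine ⟨_, div_mem_pnrR X hn.ne' (m := normSq a * hX.eigenvalues i + normSq b * hX.eigenvalues j)
    (by rw [hxy, hX.star_dotProduct_self_eigenvector_combination hij])
    (by rw [hxy, hX.star_dotProduct_mulVec_eigenvector_combination hij]),
    mem_segment_iff_div.mpr ⟨_, _, normSq_nonneg a, normSq_nonneg b, hn, ?_⟩⟩
  simp only [smul_eq_mul]
  ring

/-- For a two-qubit Hermitian operator with ordered eigenvalues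
`μ 0 ≤ μ 1 ≤ μ 2 ≤ μ 3`, the product numerical range contains the central
segment `[μ 1, μ 2]` of the spectrum. -/
theorem pnrR_two_qubit_contains_central_segment
    (X : Matrix (Fin 2 × Fin 2) (Fin 2 × Fin 2) ℂ) (hX : X.IsHermitian)
    (μ : Fin 4 → ℝ) (hmono : Monotone μ) (e : Fin 4 ≃ Fin 2 × Fin 2)
    (heig : ∀ i, μ i = hX.eigenvalues (e i)) :
    Set.Icc (μ 1) (μ 2) ⊆ pnrR X := by
  obtain ⟨r, hr, hr_seg⟩ :=
    exists_mem_pnrR_mem_segment_eigenvalues hX (e.injective.ne (show (0 : Fin 4) ≠ 1 by decide))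
  obtain ⟨s, hs, hs_seg⟩ :=
    exists_mem_pnrR_mem_segment_eigenvalues hX (e.injective.ne (show (2 : Fin 4) ≠ 3 by decide))
  rw [← heig, ← heig, segment_eq_Icc (hmono (by decide))] at hr_seg hs_seg
  exact (Set.Icc_subset_Icc hr_seg.2 hs_seg.1).trans ((pnrR_ordConnected hX).out hr hs)
end
end

section
/- Every subspace of ℂ^K ⊗ ℂ^M of dimension at least (K−1)(M−1)+1 contains a nonzero product vector ψ_A ⊗ ψ_B. -/
/-!
Write the `n = KM - dim W ≤ K + M - 2` linear conditions cutting out `W` as bilinear forms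
`F_1, …, F_n` in `R = k[x_1, …, x_K, y_1, …, y_M]`: a product vector in `W` is a common zero
`(x, y)` with `x ≠ 0 ≠ y`. If there were none, by the Nullstellensatz every `x_i y_j` would lie in
the radical of `(F_1, …, F_n)`, which would therefore contain the whole bidegree-`(s, s)` part
`R_s` for large `s`. With `h_i(s) = dim (R / (F_1, …, F_i))_s`, multiplication by `F_{i+1}` gives
`h_i(s+1) ≤ h_{i+1}(s+1) + h_i(s)`; as `h_n` eventually vanishes, `h_0(s) = dim R_s` would be
`O(s^(n-1))`, whereas `dim R_s` grows like `s^(K+M-2)`.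
-/

open Matrix Kronecker
open scoped Pointwise ComplexOrder

noncomputable section

open Module

section LinearAlgebra

variable {k E F : Type*} [Field k] [AddCommGroup E] [Module k E] [AddCommGroup F] [Module k F]

theorem Submodule.finrank_map_add_finrank_inf_ker (φ : E →ₗ[k] F) (q : Submodule k E)
    [FiniteDimensional k q] :
    finrank k (q.map φ) + finrank k ↥(q ⊓ LinearMap.ker φ) = finrank k q := by
  have hker : (LinearMap.ker φ).comap q.subtype = (q ⊓ LinearMap.ker φ).comap q.subtype := by
    ext x
    simp
  have := LinearMap.finrank_range_add_finrank_ker (φ.domRestrict q)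
  rwa [LinearMap.range_domRestrict, LinearMap.ker_domRestrict, hker,
    (Submodule.comapSubtypeEquivOfLe inf_le_left).finrank_eq] at this

/-- `(A ⊔ φ V) / A` is an image of `V / B`, so `dim U - dim A ≤ dim V - dim B`. -/
theorem Submodule.finrank_add_finrank_le_of_le_sup_map (φ : E →ₗ[k] F) {U A : Submodule k F}
    {B V : Submodule k E} [FiniteDimensional k A] [FiniteDimensional k V]
    (hBV : B ≤ V) (hU : U ≤ A ⊔ V.map φ) (hB : B.map φ ≤ A) :
    finrank k U + finrank k B ≤ finrank k A + finrank k V := by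
  have : FiniteDimensional k B := Submodule.finiteDimensional_of_le hBV
  have hV := V.finrank_map_add_finrank_inf_ker φ
  have hB' := B.finrank_map_add_finrank_inf_ker φ
  have hker : finrank k ↥(B ⊓ LinearMap.ker φ) ≤ finrank k ↥(V ⊓ LinearMap.ker φ) :=
    Submodule.finrank_mono (inf_le_inf_right _ hBV)
  have hUA : finrank k U ≤ finrank k ↥(A ⊔ V.map φ) := Submodule.finrank_mono hU
  have hBA : finrank k (B.map φ) ≤ finrank k ↥(A ⊓ V.map φ) :=
    Submodule.finrank_mono (le_inf hB (Submodule.map_mono hBV))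
  have := Submodule.finrank_sup_add_finrank_inf_eq A (V.map φ)
  omega

end LinearAlgebra

theorem Nat.exists_bound_of_le_add_of_eventually_zero {u v : ℕ → ℕ} {S : ℕ}
    (hrec : ∀ s, u (s + 1) ≤ v (s + 1) + u s) (hv : ∀ s ≥ S, v s = 0) : ∃ C, ∀ s, u s ≤ C := by
  refine ⟨∑ t ∈ Finset.range (S + 1), u t, fun s => ?_⟩
  induction s with
  | zero => exact Finset.single_le_sum (fun _ _ => Nat.zero_le _) (by simp)
  | succ s ih =>
    by_cases hs : s + 1 ≤ S
    · exact Finset.single_le_sum (fun _ _ => Nat.zero_le _) (by simp; omega)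
    · have := hrec s
      rw [hv (s + 1) (by omega)] at this
      omega

theorem Nat.le_mul_pow_succ_of_le_add {u v : ℕ → ℕ} {C d : ℕ}
    (hrec : ∀ s, u (s + 1) ≤ v (s + 1) + u s) (hv : ∀ s, v s ≤ C * (s + 1) ^ d) (s : ℕ) :
    u s ≤ (u 0 + C) * (s + 1) ^ (d + 1) := by
  induction s with
  | zero => simp
  | succ s ih =>
    have hpow : (s + 1) ^ (d + 1) ≤ (s + 1) * (s + 1 + 1) ^ d := by
      rw [pow_succ, mul_comm]
      exact Nat.mul_le_mul_left _ (Nat.pow_le_pow_left (by omega) d)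
    calc u (s + 1) ≤ C * (s + 1 + 1) ^ d + (u 0 + C) * (s + 1) ^ (d + 1) := by
          have := hv (s + 1); have := hrec s; omega
      _ ≤ (u 0 + C) * (s + 1 + 1) ^ d + (u 0 + C) * ((s + 1) * (s + 1 + 1) ^ d) := by
          gcongr; omega
      _ = (u 0 + C) * (s + 1 + 1) ^ (d + 1) := by ring

theorem Nat.exists_le_mul_pow_of_le_add {S : ℕ} (n : ℕ) {g : ℕ → ℕ → ℕ}
    (hrec : ∀ i ≤ n, ∀ s, g i (s + 1) ≤ g (i + 1) (s + 1) + g i s)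
    (hvan : ∀ s ≥ S, g (n + 1) s = 0) : ∃ C, ∀ s, g 0 s ≤ C * (s + 1) ^ n := by
  induction n generalizing g with
  | zero =>
    obtain ⟨C, hC⟩ := Nat.exists_bound_of_le_add_of_eventually_zero (hrec 0 le_rfl) hvan
    exact ⟨C, by simpa using hC⟩
  | succ n ih =>
    obtain ⟨C, hC⟩ := ih (g := fun i => g (i + 1)) (fun i hi => hrec (i + 1) (by omega)) hvan
    exact ⟨_, Nat.le_mul_pow_succ_of_le_add (hrec 0 (Nat.zero_le _)) hC⟩

theorem Nat.exists_mul_pow_lt_pow {n m : ℕ} (h : n < m) (C : ℕ) :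
    ∃ u, C * (m * u + 1) ^ n < (u + 1) ^ m := by
  refine ⟨C * m ^ n, ?_⟩
  set u := C * m ^ n
  calc C * (m * u + 1) ^ n ≤ C * (m * (u + 1)) ^ n := by gcongr; nlinarith
    _ = u * (u + 1) ^ n := by rw [mul_pow]; ring
    _ < (u + 1) ^ (n + 1) := by
      rw [pow_succ']
      exact Nat.mul_lt_mul_of_pos_right (by omega) (by positivity)
    _ ≤ (u + 1) ^ m := Nat.pow_le_pow_right (by omega) h

namespace MvPolynomial

attribute [local instance] weightedGradedAlgebra

theorem weightedHomogeneousComponent_add_mul_of_mem {k σ M : Type*} [Field k]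
    [AddCancelCommMonoid M] [DecidableEq M] {w : σ → M} {m : M} {f : MvPolynomial σ k}
    (hf : f ∈ weightedHomogeneousSubmodule k w m) (n : M) (p : MvPolynomial σ k) :
    weightedHomogeneousComponent w (n + m) (p * f) = weightedHomogeneousComponent w n p * f := by
  rw [← weightedDecomposition.decompose'_apply, ← weightedDecomposition.decompose'_apply]
  exact DirectSum.coe_decompose_mul_add_of_right_mem _ hf

end MvPolynomial

namespace Bigraded

open MvPolynomial

variable (k : Type*) [Field k] (a b : ℕ)

/-- The grading of `k[x_1, …, x_a, y_1, …, y_b]` by (degree in `x`, degree in `y`). -/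
def biweight : Fin a ⊕ Fin b → ℕ × ℕ := Sum.elim (fun _ => (1, 0)) (fun _ => (0, 1))

def diagonalPiece (s : ℕ) : Submodule k (MvPolynomial (Fin a ⊕ Fin b) k) :=
  weightedHomogeneousSubmodule k (biweight a b) (s, s)

/-- The ideal of `{x = 0} ∪ {y = 0}`. -/
def irrelevantIdeal : Ideal (MvPolynomial (Fin a ⊕ Fin b) k) :=
  Ideal.span (Set.range fun p : Fin a × Fin b => X (Sum.inl p.1) * X (Sum.inr p.2))

variable {k a b}

theorem weight_biweight (d : Fin a ⊕ Fin b →₀ ℕ) :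
    Finsupp.weight (biweight a b) d = (∑ i, d (Sum.inl i), ∑ j, d (Sum.inr j)) := by
  rw [Finsupp.weight_apply, Finsupp.sum_fintype _ _ (by simp), Fintype.sum_sum_type]
  ext <;> simp [biweight, Prod.fst_sum, Prod.snd_sum]

theorem diagonalPiece_le_homogeneousSubmodule (s : ℕ) :
    diagonalPiece k a b s ≤ homogeneousSubmodule (Fin a ⊕ Fin b) k (2 * s) := by
  intro p hp d hd
  have hw : Finsupp.weight (biweight a b) d = (s, s) := hp hd
  rw [weight_biweight, Prod.mk.injEq] at hw
  simp only [Finsupp.weight_apply, Pi.one_apply, smul_eq_mul, mul_one]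
  rw [Finsupp.sum_fintype _ _ (by simp), Fintype.sum_sum_type]
  omega

instance (s : ℕ) : FiniteDimensional k (diagonalPiece k a b s) :=
  have : FiniteDimensional k (homogeneousSubmodule (Fin a ⊕ Fin b) k (2 * s)) :=
    Module.Finite.iff_fg.mpr (homogeneousSubmodule_fg _ k _)
  Submodule.finiteDimensional_of_le (diagonalPiece_le_homogeneousSubmodule s)

theorem monomial_mem_irrelevantIdeal_pow {s : ℕ} {d : Fin a ⊕ Fin b →₀ ℕ}
    (hd : Finsupp.weight (biweight a b) d = (s, s)) (c : k) :
    monomial d c ∈ irrelevantIdeal k a b ^ s := by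
  induction s generalizing d with
  | zero => simp
  | succ s ih =>
    rw [weight_biweight, Prod.mk.injEq] at hd
    obtain ⟨i, -, hi⟩ := Finset.exists_ne_zero_of_sum_ne_zero (hd.1.trans_ne s.succ_ne_zero)
    obtain ⟨j, -, hj⟩ := Finset.exists_ne_zero_of_sum_ne_zero (hd.2.trans_ne s.succ_ne_zero)
    set e : Fin a ⊕ Fin b →₀ ℕ := Finsupp.single (Sum.inl i) 1 + Finsupp.single (Sum.inr j) 1
    have hed : e ≤ d := by
      rintro (t | t)
      · by_cases ht : t = i <;> simp_all [e]; omega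
      · by_cases ht : t = j <;> simp_all [e]; omega
    have hwe : Finsupp.weight (biweight a b) e = (1, 1) := by
      simp [e, biweight, Finsupp.weight_single]
    have hd' : Finsupp.weight (biweight a b) (d - e) = (s, s) := by
      have : Finsupp.weight (biweight a b) (d - e) + (1, 1) = (s, s) + (1, 1) := by
        rw [← hwe, ← map_add, tsub_add_cancel_of_le hed, weight_biweight, hd.1, hd.2, hwe]; rfl
      exact add_right_cancel this
    have hXX : monomial e (1 : k) = X (Sum.inl i) * X (Sum.inr j) := by
      simp [e, X, monomial_mul]
    rw [← tsub_add_cancel_of_le hed, ← mul_one c, ← monomial_mul, hXX, pow_succ]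
    exact Ideal.mul_mem_mul (ih hd') (Ideal.subset_span ⟨(i, j), rfl⟩)

theorem diagonalPiece_le_irrelevantIdeal_pow (s : ℕ) :
    diagonalPiece k a b s ≤ (irrelevantIdeal k a b ^ s).restrictScalars k := by
  intro p hp
  rw [Submodule.restrictScalars_mem, ← support_sum_monomial_coeff p]
  exact Ideal.sum_mem _ fun d hd => monomial_mem_irrelevantIdeal_pow (hp (mem_support_iff.mp hd)) _

def completeExponent (s : ℕ) (v : Fin a → ℕ) : Fin (a + 1) → ℕ :=
  Fin.snoc v (s - ∑ i, v i)

theorem sum_completeExponent {s : ℕ} {v : Fin a → ℕ} (hv : ∑ i, v i ≤ s) :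
    ∑ i, completeExponent s v i = s := by
  simp only [completeExponent, Fin.sum_univ_castSucc, Fin.snoc_castSucc, Fin.snoc_last]
  omega

theorem completeExponent_injective (s : ℕ) :
    Function.Injective (completeExponent (a := a) s) := fun v w h => by
  funext i
  simpa [completeExponent] using congrFun h i.castSucc

theorem pow_le_finrank_diagonalPiece (u : ℕ) :
    (u + 1) ^ (a + b) ≤ finrank k (diagonalPiece k (a + 1) (b + 1) ((a + b) * u)) := by
  set s := (a + b) * u
  have hsum {c : ℕ} (v : Fin c → Fin (u + 1)) (hc : c ≤ a + b) : ∑ i, (v i : ℕ) ≤ s :=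
    calc ∑ i, (v i : ℕ) ≤ ∑ _i : Fin c, u := Finset.sum_le_sum fun i _ => Fin.is_le _
      _ = c * u := by simp
      _ ≤ s := Nat.mul_le_mul_right _ hc
  let D : (Fin a → Fin (u + 1)) × (Fin b → Fin (u + 1)) → (Fin (a + 1) ⊕ Fin (b + 1) →₀ ℕ) :=
    fun t => Finsupp.equivFunOnFinite.symm
      (Sum.elim (completeExponent s (Fin.val ∘ t.1)) (completeExponent s (Fin.val ∘ t.2)))
  have hD : Function.Injective D := by
    rintro ⟨v, w⟩ ⟨v', w'⟩ h
    have h' := Finsupp.equivFunOnFinite.symm.injective h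
    exact Prod.ext
      (Fin.val_injective.comp_left (completeExponent_injective s (funext (congrFun h' <| .inl ·))))
      (Fin.val_injective.comp_left (completeExponent_injective s (funext (congrFun h' <| .inr ·))))
  have hmem (t) : monomial (D t) (1 : k) ∈ diagonalPiece k (a + 1) (b + 1) s := by
    refine isWeightedHomogeneous_monomial _ _ _ ?_
    rw [weight_biweight]
    simp only [D, Finsupp.coe_equivFunOnFinite_symm, Sum.elim_inl, Sum.elim_inr]
    rw [sum_completeExponent (v := Fin.val ∘ t.1) (hsum t.1 (Nat.le_add_right a b)),
      sum_completeExponent (v := Fin.val ∘ t.2) (hsum t.2 (Nat.le_add_left b a))]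
  have hli : LinearIndependent k fun t => (⟨_, hmem t⟩ : diagonalPiece k (a + 1) (b + 1) s) :=
    .of_comp (Submodule.subtype _) ((basisMonomials _ k).linearIndependent.comp D hD)
  simpa [pow_add] using hli.fintype_card_le_finrank

section Forms

attribute [local instance] weightedGradedAlgebra

variable {σ : Type*} (F : ℕ → MvPolynomial σ k)

def formIdeal (i : ℕ) : Ideal (MvPolynomial σ k) := Ideal.span (F '' Set.Iio i)

theorem formIdeal_zero : formIdeal F 0 = ⊥ := by simp [formIdeal]

theorem formIdeal_mono {i j : ℕ} (h : i ≤ j) : formIdeal F i ≤ formIdeal F j :=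
  Ideal.span_mono (Set.image_mono (Set.Iio_subset_Iio h))

theorem formIdeal_succ (i : ℕ) : formIdeal F (i + 1) = formIdeal F i ⊔ Ideal.span {F i} := by
  rw [formIdeal, formIdeal, ← Ideal.span_union, ← Set.image_singleton, ← Set.image_union]
  congr 2
  ext
  simp

theorem formIdeal_isHomogeneous {M : Type*} [AddCommMonoid M] [DecidableEq M] {w : σ → M}
    {m : ℕ → M} (hF : ∀ l, F l ∈ weightedHomogeneousSubmodule k w (m l)) (i : ℕ) :
    (formIdeal F i).IsHomogeneous (weightedHomogeneousSubmodule k w) :=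
  Ideal.homogeneous_span _ _ fun _ ⟨l, _, hl⟩ => ⟨m l, hl ▸ hF l⟩

end Forms

section HilbertFunction

variable (F : ℕ → MvPolynomial (Fin a ⊕ Fin b) k)

def gradedPart (i s : ℕ) : Submodule k (MvPolynomial (Fin a ⊕ Fin b) k) :=
  (formIdeal F i).restrictScalars k ⊓ diagonalPiece k a b s

/-- The Hilbert function of `k[x, y] / (F 0, …, F (i-1))` in bidegree `(s, s)`. -/
def hilbertFn (i s : ℕ) : ℕ :=
  finrank k (diagonalPiece k a b s) - finrank k (gradedPart F i s)

instance (i s : ℕ) : FiniteDimensional k (gradedPart F i s) :=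
  Submodule.finiteDimensional_of_le inf_le_right

theorem hilbertFn_zero_left (s : ℕ) : hilbertFn F 0 s = finrank k (diagonalPiece k a b s) := by
  rw [hilbertFn, gradedPart, formIdeal_zero, Submodule.restrictScalars_bot, bot_inf_eq,
    finrank_bot, Nat.sub_zero]

theorem hilbertFn_eq_zero {i s : ℕ}
    (h : diagonalPiece k a b s ≤ (formIdeal F i).restrictScalars k) : hilbertFn F i s = 0 := by
  rw [hilbertFn, gradedPart, inf_eq_right.mpr h, Nat.sub_self]

variable {F}

theorem gradedPart_succ_le (hF : ∀ l, F l ∈ diagonalPiece k a b 1) (i s : ℕ) :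
    gradedPart F (i + 1) (s + 1) ≤
      gradedPart F i (s + 1) ⊔ (diagonalPiece k a b s).map (LinearMap.mulLeft k (F i)) := by
  rintro u ⟨hu, hus⟩
  rw [formIdeal_succ] at hu
  obtain ⟨v, hv, _, hp, rfl⟩ := Submodule.mem_sup.mp hu
  obtain ⟨p, rfl⟩ := Ideal.mem_span_singleton'.mp hp
  rw [← (hus : IsWeightedHomogeneous _ _ _).weightedHomogeneousComponent_same, map_add,
    show ((s + 1, s + 1) : ℕ × ℕ) = (s, s) + (1, 1) from rfl,
    weightedHomogeneousComponent_add_mul_of_mem (hF i)]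
  refine Submodule.add_mem_sup ⟨?_, weightedHomogeneousComponent_mem _ _ _⟩
    ⟨_, weightedHomogeneousComponent_mem _ p _, mul_comm _ _⟩
  exact weightedHomogeneousComponent_mem_of_mem k _ (formIdeal_isHomogeneous F hF i) hv _

theorem map_gradedPart_le (hF : ∀ l, F l ∈ diagonalPiece k a b 1) (i s : ℕ) :
    (gradedPart F i s).map (LinearMap.mulLeft k (F i)) ≤ gradedPart F i (s + 1) := by
  rintro _ ⟨q, ⟨hq, hqs⟩, rfl⟩
  exact ⟨Ideal.mul_mem_left _ _ hq, add_comm s 1 ▸ (hF i).mul hqs⟩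

theorem hilbertFn_succ_le (hF : ∀ l, F l ∈ diagonalPiece k a b 1) (i s : ℕ) :
    hilbertFn F i (s + 1) ≤ hilbertFn F (i + 1) (s + 1) + hilbertFn F i s := by
  have key := Submodule.finrank_add_finrank_le_of_le_sup_map (LinearMap.mulLeft k (F i))
    (B := gradedPart F i s) inf_le_right (gradedPart_succ_le hF i s) (map_gradedPart_le hF i s)
  have h₁ := Submodule.finrank_mono (show gradedPart F i (s + 1) ≤ gradedPart F (i + 1) (s + 1)
    from fun _ hu => ⟨formIdeal_mono F i.le_succ hu.1, hu.2⟩)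
  have h₂ := Submodule.finrank_mono
    (show gradedPart F (i + 1) (s + 1) ≤ diagonalPiece k a b (s + 1) from inf_le_right)
  have h₃ := Submodule.finrank_mono
    (show gradedPart F i s ≤ diagonalPiece k a b s from inf_le_right)
  simp only [hilbertFn]
  omega

end HilbertFunction

def bilinearForm (φ : Dual k (Fin a × Fin b → k)) : MvPolynomial (Fin a ⊕ Fin b) k :=
  ∑ p, C (φ (Pi.single p 1)) * (X (Sum.inl p.1) * X (Sum.inr p.2))

theorem bilinearForm_mem (φ : Dual k (Fin a × Fin b → k)) :
    bilinearForm φ ∈ diagonalPiece k a b 1 :=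
  Submodule.sum_mem _ fun _ _ =>
    ((isWeightedHomogeneous_X k _ _).mul (isWeightedHomogeneous_X k _ _)).C_mul _

theorem eval_bilinearForm (φ : Dual k (Fin a × Fin b → k)) (z : Fin a ⊕ Fin b → k) :
    eval z (bilinearForm φ) = φ fun p => z (Sum.inl p.1) * z (Sum.inr p.2) := by
  conv_rhs => rw [pi_eq_sum_univ' fun p : Fin a × Fin b => z (Sum.inl p.1) * z (Sum.inr p.2)]
  simp [bilinearForm, mul_comm]

theorem irrelevantIdeal_le_radical [IsAlgClosed k] {I : Ideal (MvPolynomial (Fin a ⊕ Fin b) k)}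
    (hI : ∀ z ∈ zeroLocus k I, z ∘ Sum.inl = 0 ∨ z ∘ Sum.inr = 0) :
    irrelevantIdeal k a b ≤ I.radical := by
  rw [← vanishingIdeal_zeroLocus_eq_radical (K := k), irrelevantIdeal, Ideal.span_le]
  rintro _ ⟨⟨i, j⟩, rfl⟩ z hz
  rcases hI z hz with h | h
  · simpa using .inl (congrFun h i)
  · simpa using .inr (congrFun h j)

theorem exists_diagonalPiece_le [IsAlgClosed k] {I : Ideal (MvPolynomial (Fin a ⊕ Fin b) k)}
    (hI : ∀ z ∈ zeroLocus k I, z ∘ Sum.inl = 0 ∨ z ∘ Sum.inr = 0) :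
    ∃ N, ∀ s ≥ N, diagonalPiece k a b s ≤ I.restrictScalars k := by
  obtain ⟨N, hN⟩ := Ideal.exists_pow_le_of_le_radical_of_fg (irrelevantIdeal_le_radical hI)
    (Submodule.fg_span (Set.finite_range _))
  exact ⟨N, fun s hs => (diagonalPiece_le_irrelevantIdeal_pow s).trans
    fun _ hp => hN (Ideal.pow_le_pow_right hs hp)⟩

theorem exists_ne_zero_map_prod_eq_zero [IsAlgClosed k] {n : ℕ} (hn : n ≤ a + b)
    (f : (Fin (a + 1) × Fin (b + 1) → k) →ₗ[k] Fin n → k) :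
    ∃ x : Fin (a + 1) → k, ∃ y : Fin (b + 1) → k,
      x ≠ 0 ∧ y ≠ 0 ∧ f (fun p => x p.1 * y p.2) = 0 := by
  rcases n with _ | n
  · exact ⟨1, 1, one_ne_zero, one_ne_zero, Subsingleton.elim _ _⟩
  by_contra! hne
  let F : ℕ → MvPolynomial (Fin (a + 1) ⊕ Fin (b + 1)) k := fun l =>
    if h : l < n + 1 then bilinearForm (LinearMap.proj ⟨l, h⟩ ∘ₗ f) else 0
  have hF (l : ℕ) : F l ∈ diagonalPiece k (a + 1) (b + 1) 1 := by
    unfold F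
    split_ifs
    exacts [bilinearForm_mem _, zero_mem _]
  have hzero : ∀ z ∈ zeroLocus k (formIdeal F (n + 1)), z ∘ Sum.inl = 0 ∨ z ∘ Sum.inr = 0 := by
    intro z hz
    by_contra! h
    refine hne _ _ h.1 h.2 (funext fun l => ?_)
    have := hz (F l) (Ideal.subset_span ⟨l, l.2, rfl⟩)
    rwa [show F l = _ from dif_pos l.2, aeval_eq_eval, eval_bilinearForm] at this
  obtain ⟨N, hN⟩ := exists_diagonalPiece_le hzero
  obtain ⟨C, hC⟩ := Nat.exists_le_mul_pow_of_le_add n (fun i _ s => hilbertFn_succ_le hF i s)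
    fun s hs => hilbertFn_eq_zero F (hN s hs)
  obtain ⟨u, hu⟩ := Nat.exists_mul_pow_lt_pow (by omega : n < a + b) C
  have := (pow_le_finrank_diagonalPiece u).trans ((hilbertFn_zero_left F _).ge.trans (hC _))
  omega

end Bigraded

/-- Every subspace of `ℂ^K ⊗ ℂ^M` of dimension at least `(K-1)(M-1)+1`
contains a nonzero product vector. -/
theorem subspace_contains_product_vector {K M : ℕ}
    (W : Submodule ℂ (Fin K × Fin M → ℂ))
    (hW : (K - 1) * (M - 1) + 1 ≤ Module.finrank ℂ W) :
    ∃ x : Fin K → ℂ, ∃ y : Fin M → ℂ, x ≠ 0 ∧ y ≠ 0 ∧ prodVec x y ∈ W := by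
  have hdim := W.finrank_quotient_add_finrank
  rw [Module.finrank_fintype_fun_eq_card, Fintype.card_prod, Fintype.card_fin,
    Fintype.card_fin] at hdim
  obtain ⟨a, rfl⟩ : ∃ a, K = a + 1 := Nat.exists_eq_succ_of_ne_zero (by rintro rfl; omega)
  obtain ⟨b, rfl⟩ : ∃ b, M = b + 1 := Nat.exists_eq_succ_of_ne_zero (by rintro rfl; omega)
  simp only [Nat.add_sub_cancel] at hW
  obtain ⟨x, y, hx, hy, hxy⟩ := Bigraded.exists_ne_zero_map_prod_eq_zero (by nlinarith)
    ((Module.finBasis ℂ (_ ⧸ W)).equivFun.toLinearMap ∘ₗ W.mkQ)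
  refine ⟨x, y, hx, hy, ?_⟩
  change (fun p => x p.1 * y p.2) ∈ W
  simpa using hxy
end
end

section
/- For the 4×4 Hermitian matrix X_{t,s} with diagonal (2,1,−1,−2), antidiagonal entries t (positions (1,4),(4,1)) and s (positions (2,3),(3,2)), with t,s ≥ 0, the product numerical range (with respect to the ℂ²⊗ℂ² product structure in the standard basis) equals [−f(t+s), f(t+s)], where f(u) = 2 for 0 ≤ u < √3 and f(u) = √(u⁴+10u²+9)/(2u) for u ≥ √3. -/
/-!
On a product vector `x ⊗ y` the expectation of `X_{t,s}` is a diagonal part depending only on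
`a = |x₀|, b = |x₁|, c = |y₀|, d = |y₁|`, plus two interference terms bounded by `2t·abcd` and
`2s·abcd`, with equality on nonnegative real vectors; so only `r = t + s` matters. In the
double-angle coordinates `(u, A) = (a² - b², 2ab)` and `(v, C) = (c² - d², 2cd)`, two points of the
unit circle, twice the value is `3u + v + rAC`. Cauchy–Schwarz in `(v, C)` reduces this to
`3u + √(1 + r²(1 - u²))`, whose maximum over `u ∈ [-1, 1]` is `2 f(r)`.

The local unitary `x ↦ (x₁, -x₀)`, `y ↦ (y₁, y₀)` negates the expectation, so the range is
symmetric; and the range is connected, being a continuous image of a product of spheres, so it is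
the whole interval `[-f(r), f(r)]`.
-/

open Matrix Kronecker
open scoped Pointwise ComplexOrder

noncomputable section

/-- The matrix `X_{t,s}` from the paper, written in the product basis
`|00⟩,|01⟩,|10⟩,|11⟩` of `ℂ² ⊗ ℂ²`. -/
def Xts (t s : ℝ) : Matrix (Fin 2 × Fin 2) (Fin 2 × Fin 2) ℂ :=
  Matrix.of fun p q =>
    if p = q then
      (if p = (0, 0) then 2 else if p = (0, 1) then 1 else if p = (1, 0) then -1 else -2)
    else if (p = (0, 0) ∧ q = (1, 1)) ∨ (p = (1, 1) ∧ q = (0, 0)) then (t : ℂ)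
    else if (p = (0, 1) ∧ q = (1, 0)) ∨ (p = (1, 0) ∧ q = (0, 1)) then (s : ℂ)
    else 0

/-- The boundary function `f`. -/
def fXts (u : ℝ) : ℝ :=
  if u < Real.sqrt 3 then 2 else Real.sqrt (u ^ 4 + 10 * u ^ 2 + 9) / (2 * u)

open ComplexConjugate

lemma mul_add_mul_le_sqrt_mul_sqrt (p q a b : ℝ) :
    p * a + q * b ≤ √(p ^ 2 + q ^ 2) * √(a ^ 2 + b ^ 2) := by
  simpa [Fin.sum_univ_two] using Real.sum_mul_le_sqrt_mul_sqrt Finset.univ ![p, q] ![a, b]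

lemma double_angle_sq_add_sq {a b : ℝ} (hab : a ^ 2 + b ^ 2 = 1) :
    (a ^ 2 - b ^ 2) ^ 2 + (2 * a * b) ^ 2 = 1 := by
  linear_combination (a ^ 2 + b ^ 2 + 1) * hab

lemma exists_half_angle_of_sq_add_sq_eq_one {u A : ℝ} (h : u ^ 2 + A ^ 2 = 1) :
    ∃ a b : ℝ, a ^ 2 + b ^ 2 = 1 ∧ a ^ 2 - b ^ 2 = u ∧ 2 * a * b = A := by
  obtain ⟨w, hw⟩ := IsAlgClosed.exists_pow_nat_eq (⟨u, A⟩ : ℂ) two_pos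
  have hre : w.re ^ 2 - w.im ^ 2 = u := by
    simpa [pow_two] using congrArg Complex.re hw
  have him : 2 * w.re * w.im = A := by
    have := congrArg Complex.im hw
    simp only [pow_two, Complex.mul_im] at this
    linarith
  have hnorm : (w.re ^ 2 + w.im ^ 2) ^ 2 = 1 := by rw [← h, ← hre, ← him]; ring
  exact ⟨w.re, w.im, by nlinarith [sq_nonneg w.re, sq_nonneg w.im], hre, him⟩

lemma norm_sq_add_norm_sq_eq_one {x : Fin 2 → ℂ} (hx : star x ⬝ᵥ x = 1) :
    ‖x 0‖ ^ 2 + ‖x 1‖ ^ 2 = 1 := by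
  simp only [dotProduct, Fin.sum_univ_two, Pi.star_apply, RCLike.star_def,
    Complex.conj_mul'] at hx
  exact_mod_cast hx

lemma star_dotProduct_self_ofReal {a b : ℝ} (hab : a ^ 2 + b ^ 2 = 1) :
    star ![(a : ℂ), b] ⬝ᵥ ![(a : ℂ), b] = 1 := by
  simp only [dotProduct, Fin.sum_univ_two, Pi.star_apply, RCLike.star_def, Complex.conj_mul',
    Matrix.cons_val_zero, Matrix.cons_val_one, Complex.norm_real, Real.norm_eq_abs]
  norm_cast
  simpa only [sq_abs] using hab

lemma isPreconnected_setOf_star_dotProduct_self_eq_one (K : ℕ) :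
    IsPreconnected {x : Fin K → ℂ | star x ⬝ᵥ x = 1} := by
  rcases Nat.eq_zero_or_pos K with rfl | hK
  · convert isPreconnected_empty
    ext x
    simp [dotProduct]
  have hsphere : {x : Fin K → ℂ | star x ⬝ᵥ x = 1} =
      WithLp.ofLp '' Metric.sphere (0 : EuclideanSpace ℂ (Fin K)) 1 := by
    rw [Set.image_eq_preimage_of_inverse (WithLp.toLp_ofLp 2) (WithLp.ofLp_toLp 2)]
    ext x
    have hx : star x ⬝ᵥ x = (‖WithLp.toLp 2 x‖ : ℂ) ^ 2 := by
      have := inner_self_eq_norm_sq_to_K (𝕜 := ℂ) (WithLp.toLp 2 x)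
      rwa [EuclideanSpace.inner_toLp_toLp, dotProduct_comm] at this
    simp only [Set.mem_ofPred_eq, Set.mem_preimage, mem_sphere_zero_iff_norm, hx]
    norm_cast
    exact pow_eq_one_iff_of_nonneg (norm_nonneg _) two_ne_zero
  rw [hsphere]
  refine (isPreconnected_sphere ?_ _ _).image _ (PiLp.continuous_ofLp 2 _).continuousOn
  apply Module.lt_rank_of_lt_finrank
  rw [finrank_real_of_complex, finrank_euclideanSpace_fin]
  omega

lemma Matrix.IsHermitian.isPreconnected_pnrR {K M : ℕ}
    {X : Matrix (Fin K × Fin M) (Fin K × Fin M) ℂ} (hX : X.IsHermitian) :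
    IsPreconnected (pnrR X) := by
  have hpnrR : pnrR X = (fun p : (Fin K → ℂ) × (Fin M → ℂ) =>
      (star (prodVec p.1 p.2) ⬝ᵥ (X *ᵥ prodVec p.1 p.2)).re) ''
      ({x | star x ⬝ᵥ x = 1} ×ˢ {y | star y ⬝ᵥ y = 1}) := by
    ext r
    constructor
    · rintro ⟨x, y, hx, hy, hr⟩
      exact ⟨(x, y), ⟨hx, hy⟩, by simp [hr]⟩
    · rintro ⟨⟨x, y⟩, ⟨hx, hy⟩, rfl⟩
      refine ⟨x, y, hx, hy, Complex.ext rfl ?_⟩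
      simpa using hX.im_star_dotProduct_mulVec_self (prodVec x y)
  rw [hpnrR]
  refine ((isPreconnected_setOf_star_dotProduct_self_eq_one K).prod
    (isPreconnected_setOf_star_dotProduct_self_eq_one M)).image _ (Continuous.continuousOn ?_)
  unfold prodVec
  fun_prop

/- The first Cauchy–Schwarz step maximizes over the unit vector `(v, C)`. The second one, applied
to `(r u, S)` with `(r u)² + S² = 1 + r²`, is attained at some `u ≤ 1` exactly when `r² ≥ 3`;
for `r² < 3` the maximum over `u ∈ [-1, 1]` is at the endpoint `u = 1`. -/
lemma three_mul_add_add_mul_le_two_fXts {r u A v C : ℝ} (hr : 0 ≤ r)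
    (huA : u ^ 2 + A ^ 2 = 1) (hvC : v ^ 2 + C ^ 2 = 1) :
    3 * u + v + r * A * C ≤ 2 * fXts r := by
  set S := √(1 + (r * A) ^ 2)
  have hS : S ^ 2 = 1 + (r * A) ^ 2 := Real.sq_sqrt (by positivity)
  have hvC_le : v + r * A * C ≤ S := by
    simpa [hvC] using mul_add_mul_le_sqrt_mul_sqrt 1 (r * A) v C
  suffices 3 * u + S ≤ 2 * fXts r by linarith
  unfold fXts
  split_ifs with hr3
  · have hr2 : r ^ 2 < 3 := (Real.lt_sqrt hr).mp hr3
    have : S ≤ 4 - 3 * u :=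
      Real.sqrt_le_iff.mpr ⟨by nlinarith, by nlinarith [sq_nonneg (u - 1)]⟩
    linarith
  · have hr0 : 0 < r := lt_of_lt_of_le (by positivity) (not_lt.mp hr3)
    have hcs : 3 * (r * u) + r * S ≤ √(r ^ 4 + 10 * r ^ 2 + 9) := by
      have := mul_add_mul_le_sqrt_mul_sqrt 3 r (r * u) S
      rwa [← Real.sqrt_mul (by positivity), show (r * u) ^ 2 + S ^ 2 = 1 + r ^ 2 by
        linear_combination hS + r ^ 2 * huA, show (3 ^ 2 + r ^ 2) * (1 + r ^ 2) =
        r ^ 4 + 10 * r ^ 2 + 9 by ring] at this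
    rw [mul_div_assoc', le_div_iff₀ (by positivity)]
    linarith

/- The equality cases of the two Cauchy–Schwarz steps above. -/
lemma exists_three_mul_add_add_mul_eq_two_fXts {r : ℝ} (hr : 0 ≤ r) :
    ∃ u A v C : ℝ, u ^ 2 + A ^ 2 = 1 ∧ v ^ 2 + C ^ 2 = 1 ∧
      3 * u + v + r * A * C = 2 * fXts r := by
  by_cases hr3 : r < √3
  · exact ⟨1, 0, 1, 0, by norm_num, by norm_num, by rw [fXts, if_pos hr3]; ring⟩
  have hr0 : 0 < r := lt_of_lt_of_le (by positivity) (not_lt.mp hr3)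
  have hr4 : 9 ≤ r ^ 4 := by
    have := (Real.sqrt_le_left hr).mp (not_lt.mp hr3)
    nlinarith
  set e := √(r ^ 2 + 1)
  set n := √(r ^ 2 + 9)
  set g := √(r ^ 4 - 9)
  have he : e ^ 2 = r ^ 2 + 1 := Real.sq_sqrt (by positivity)
  have hn : n ^ 2 = r ^ 2 + 9 := Real.sq_sqrt (by positivity)
  have hg : g ^ 2 = r ^ 4 - 9 := Real.sq_sqrt (by linarith)
  have he0 : 0 < e := Real.sqrt_pos.mpr (by positivity)
  have hn0 : 0 < n := Real.sqrt_pos.mpr (by positivity)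
  have hf : fXts r = e * n / (2 * r) := by
    rw [fXts, if_neg hr3, ← Real.sqrt_mul (by positivity)]
    ring_nf
  refine ⟨3 * e / (r * n), g / (r * n), n / (r * e), g / (r * e), ?_, ?_, ?_⟩
  · field_simp
    linear_combination 9 * he + hg - r ^ 2 * hn
  · field_simp
    linear_combination hn + hg - r ^ 2 * he
  · rw [hf]
    field_simp
    linear_combination (9 - n ^ 2) * he - r ^ 2 * hn + hg

def xtsProdForm (r a b c d : ℝ) : ℝ :=
  2 * a ^ 2 * c ^ 2 + a ^ 2 * d ^ 2 - b ^ 2 * c ^ 2 - 2 * b ^ 2 * d ^ 2 + 2 * r * a * b * c * d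

lemma two_mul_xtsProdForm (r : ℝ) {a b c d : ℝ} (hab : a ^ 2 + b ^ 2 = 1)
    (hcd : c ^ 2 + d ^ 2 = 1) :
    2 * xtsProdForm r a b c d =
      3 * (a ^ 2 - b ^ 2) + (c ^ 2 - d ^ 2) + r * (2 * a * b) * (2 * c * d) := by
  unfold xtsProdForm
  linear_combination (c ^ 2 - d ^ 2) * hab + 3 * (a ^ 2 - b ^ 2) * hcd

lemma xtsProdForm_le_fXts {r a b c d : ℝ} (hr : 0 ≤ r) (hab : a ^ 2 + b ^ 2 = 1)
    (hcd : c ^ 2 + d ^ 2 = 1) : xtsProdForm r a b c d ≤ fXts r := by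
  have := three_mul_add_add_mul_le_two_fXts hr (double_angle_sq_add_sq hab)
    (double_angle_sq_add_sq hcd)
  linarith [two_mul_xtsProdForm r hab hcd]

lemma exists_xtsProdForm_eq_fXts {r : ℝ} (hr : 0 ≤ r) :
    ∃ a b c d : ℝ, a ^ 2 + b ^ 2 = 1 ∧ c ^ 2 + d ^ 2 = 1 ∧ xtsProdForm r a b c d = fXts r := by
  obtain ⟨u, A, v, C, huA, hvC, h⟩ := exists_three_mul_add_add_mul_eq_two_fXts hr
  obtain ⟨a, b, hab, rfl, rfl⟩ := exists_half_angle_of_sq_add_sq_eq_one huA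
  obtain ⟨c, d, hcd, rfl, rfl⟩ := exists_half_angle_of_sq_add_sq_eq_one hvC
  exact ⟨a, b, c, d, hab, hcd, by linarith [two_mul_xtsProdForm r hab hcd]⟩

lemma Xts_isHermitian (t s : ℝ) : (Xts t s).IsHermitian := by
  ext ⟨i, j⟩ ⟨k, l⟩
  fin_cases i <;> fin_cases j <;> fin_cases k <;> fin_cases l <;> simp [Xts]

lemma Xts_expectation (t s : ℝ) (x y : Fin 2 → ℂ) :
    star (prodVec x y) ⬝ᵥ (Xts t s *ᵥ prodVec x y) =
      ((2 * ‖x 0‖ ^ 2 * ‖y 0‖ ^ 2 + ‖x 0‖ ^ 2 * ‖y 1‖ ^ 2 - ‖x 1‖ ^ 2 * ‖y 0‖ ^ 2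
        - 2 * ‖x 1‖ ^ 2 * ‖y 1‖ ^ 2 + 2 * t * (conj (x 0 * y 0) * (x 1 * y 1)).re
        + 2 * s * (conj (x 0 * y 1) * (x 1 * y 0)).re : ℝ) : ℂ) := by
  have hpoly : star (prodVec x y) ⬝ᵥ (Xts t s *ᵥ prodVec x y) =
      conj (x 0 * y 0) * (2 * (x 0 * y 0) + t * (x 1 * y 1))
      + conj (x 0 * y 1) * ((x 0 * y 1) + s * (x 1 * y 0))
      + conj (x 1 * y 0) * (s * (x 0 * y 1) - (x 1 * y 0))
      + conj (x 1 * y 1) * (t * (x 0 * y 0) - 2 * (x 1 * y 1)) := by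
    simp [dotProduct, mulVec, Xts, prodVec, Fintype.sum_prod_type, Fin.sum_univ_two,
      Prod.ext_iff]
    ring
  rw [hpoly]
  apply Complex.ext <;>
    simp [Complex.sq_norm, Complex.normSq_apply, Complex.mul_re, Complex.mul_im] <;> ring

lemma Xts_expectation_ofReal (t s a b c d : ℝ) :
    star (prodVec ![(a : ℂ), b] ![(c : ℂ), d]) ⬝ᵥ
        (Xts t s *ᵥ prodVec ![(a : ℂ), b] ![(c : ℂ), d]) =
      xtsProdForm (t + s) a b c d := by
  rw [Xts_expectation]
  congr 1
  simp only [xtsProdForm, Matrix.cons_val_zero, Matrix.cons_val_one, Complex.norm_real,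
    Real.norm_eq_abs, sq_abs, ← Complex.ofReal_mul, Complex.conj_ofReal, Complex.ofReal_re]
  ring

lemma Xts_expectation_swap (t s : ℝ) (x y : Fin 2 → ℂ) :
    star (prodVec ![x 1, -x 0] ![y 1, y 0]) ⬝ᵥ (Xts t s *ᵥ prodVec ![x 1, -x 0] ![y 1, y 0]) =
      -(star (prodVec x y) ⬝ᵥ (Xts t s *ᵥ prodVec x y)) := by
  simp [dotProduct, mulVec, Xts, prodVec, Fintype.sum_prod_type, Fin.sum_univ_two,
    Prod.ext_iff]
  ring

lemma re_Xts_expectation_le {t s : ℝ} (ht : 0 ≤ t) (hs : 0 ≤ s) (x y : Fin 2 → ℂ) :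
    (star (prodVec x y) ⬝ᵥ (Xts t s *ᵥ prodVec x y)).re ≤
      xtsProdForm (t + s) ‖x 0‖ ‖x 1‖ ‖y 0‖ ‖y 1‖ := by
  rw [Xts_expectation, Complex.ofReal_re, xtsProdForm]
  have h₁ : (conj (x 0 * y 0) * (x 1 * y 1)).re ≤ ‖x 0‖ * ‖x 1‖ * ‖y 0‖ * ‖y 1‖ :=
    (Complex.re_le_norm _).trans_eq (by simp only [norm_mul, Complex.norm_conj]; ring)
  have h₂ : (conj (x 0 * y 1) * (x 1 * y 0)).re ≤ ‖x 0‖ * ‖x 1‖ * ‖y 0‖ * ‖y 1‖ :=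
    (Complex.re_le_norm _).trans_eq (by simp only [norm_mul, Complex.norm_conj]; ring)
  nlinarith [mul_le_mul_of_nonneg_left h₁ ht, mul_le_mul_of_nonneg_left h₂ hs]

lemma le_fXts_of_mem_pnrR_Xts {t s r : ℝ} (ht : 0 ≤ t) (hs : 0 ≤ s)
    (hr : r ∈ pnrR (Xts t s)) : r ≤ fXts (t + s) := by
  obtain ⟨x, y, hx, hy, hxy⟩ := hr
  have := re_Xts_expectation_le ht hs x y
  rw [hxy, Complex.ofReal_re] at this
  exact this.trans (xtsProdForm_le_fXts (add_nonneg ht hs) (norm_sq_add_norm_sq_eq_one hx)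
    (norm_sq_add_norm_sq_eq_one hy))

lemma neg_mem_pnrR_Xts {t s r : ℝ} (hr : r ∈ pnrR (Xts t s)) : -r ∈ pnrR (Xts t s) := by
  obtain ⟨x, y, hx, hy, hxy⟩ := hr
  refine ⟨![x 1, -x 0], ![y 1, y 0], by simpa [dotProduct, add_comm] using hx,
    by simpa [dotProduct, add_comm] using hy, ?_⟩
  rw [Xts_expectation_swap, hxy, Complex.ofReal_neg]

lemma fXts_mem_pnrR_Xts {t s : ℝ} (hts : 0 ≤ t + s) : fXts (t + s) ∈ pnrR (Xts t s) := by
  obtain ⟨a, b, c, d, hab, hcd, h⟩ := exists_xtsProdForm_eq_fXts hts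
  exact ⟨_, _, star_dotProduct_self_ofReal hab, star_dotProduct_self_ofReal hcd,
    by rw [Xts_expectation_ofReal, h]⟩

/-- Product numerical range of `X_{t,s}` equals `[-f(t+s), f(t+s)]`. -/
theorem pnrR_Xts (t s : ℝ) (ht : 0 ≤ t) (hs : 0 ≤ s) :
    pnrR (Xts t s) = Set.Icc (-(fXts (t + s))) (fXts (t + s)) := by
  refine Set.Subset.antisymm (fun r hr => ⟨?_, le_fXts_of_mem_pnrR_Xts ht hs hr⟩) ?_
  · exact neg_le.mp (le_fXts_of_mem_pnrR_Xts ht hs (neg_mem_pnrR_Xts hr))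
  · have hf := fXts_mem_pnrR_Xts (add_nonneg ht hs)
    exact (Xts_isHermitian t s).isPreconnected_pnrR.Icc_subset (neg_mem_pnrR_Xts hf) hf
end
end

section
/- Separable numerical range equals the convex hull of product numerical range: for any operator X on ℂ^K ⊗ ℂ^M, Λ^sep(X) = co(Λ⊗(X)). -/
/-!
A density matrix is a convex combination of pure states `v vᴴ` (spectral decomposition), and
`(ρA, ρB) ↦ Tr(X (ρA ⊗ ρB))` is real-bilinear, so `Tr(X (ρA ⊗ ρB))` lies in the convex hull of
its values on pure product states, which are exactly the points `⟨x ⊗ y, X (x ⊗ y)⟩` of the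
product numerical range. Summing over a separable decomposition gives `Λ^sep(X) ⊆ co Λ⊗(X)`.
Conversely, a convex combination `∑ wᵢ ⟨xᵢ ⊗ yᵢ, X (xᵢ ⊗ yᵢ)⟩` is `Tr(Xρ)` for the separable
state `ρ = ∑ wᵢ xᵢxᵢᴴ ⊗ yᵢyᵢᴴ`.
-/

open Matrix Kronecker
open scoped Pointwise ComplexOrder

noncomputable section

/-- A density matrix: positive semidefinite with unit trace. -/
def IsDensity {n : ℕ} (ρ : Matrix (Fin n) (Fin n) ℂ) : Prop :=
  ρ.PosSemidef ∧ ρ.trace = 1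

/-- Separable numerical range: expectation values `Tr(Xρ)` over separable states. -/
def sepRange {K M : ℕ} (X : Matrix (Fin K × Fin M) (Fin K × Fin M) ℂ) : Set ℂ :=
  {z | ∃ (n : ℕ) (p : Fin n → ℝ) (ρA : Fin n → Matrix (Fin K) (Fin K) ℂ)
      (ρB : Fin n → Matrix (Fin M) (Fin M) ℂ),
    (∀ i, 0 ≤ p i) ∧ (∑ i, p i = 1) ∧ (∀ i, IsDensity (ρA i)) ∧ (∀ i, IsDensity (ρB i)) ∧
    (X * ∑ i, ((p i : ℂ) • (ρA i ⊗ₖ ρB i))).trace = z}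

theorem mem_convexHull_iff_exists_fin {𝕜 E : Type*} [Field 𝕜] [LinearOrder 𝕜]
    [IsStrictOrderedRing 𝕜] [AddCommGroup E] [Module 𝕜 E] {s : Set E} {x : E} :
    x ∈ convexHull 𝕜 s ↔ ∃ (n : ℕ) (w : Fin n → 𝕜) (z : Fin n → E), (∀ i, 0 ≤ w i) ∧
      ∑ i, w i = 1 ∧ (∀ i, z i ∈ s) ∧ ∑ i, w i • z i = x := by
  constructor
  · rw [mem_convexHull_iff_exists_fintype]
    rintro ⟨ι, _, w, z, hw₀, hw₁, hz, rfl⟩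
    let e := (Fintype.equivFin ι).symm
    refine ⟨Fintype.card ι, w ∘ e, z ∘ e, fun i => hw₀ _, ?_, fun i => hz _, ?_⟩
    · rwa [Function.comp_def, e.sum_comp w]
    · exact e.sum_comp fun i => w i • z i
  · rintro ⟨n, w, z, hw₀, hw₁, hz, hx⟩
    exact mem_convexHull_of_exists_fintype w z hw₀ hw₁ hz hx

theorem image2_convexHull_subset_convexHull_image2 {𝕜 E F G : Type*} [CommSemiring 𝕜]
    [PartialOrder 𝕜] [AddCommMonoid E] [AddCommMonoid F] [AddCommMonoid G] [Module 𝕜 E]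
    [Module 𝕜 F] [Module 𝕜 G] (B : E →ₗ[𝕜] F →ₗ[𝕜] G) (s : Set E) (t : Set F) :
    Set.image2 (fun x y => B x y) (convexHull 𝕜 s) (convexHull 𝕜 t) ⊆
      convexHull 𝕜 (Set.image2 (fun x y => B x y) s t) := by
  have left : ∀ y ∈ t, (B.flip y) '' convexHull 𝕜 s ⊆
      convexHull 𝕜 (Set.image2 (fun x y => B x y) s t) := fun y hy => by
    rw [LinearMap.image_convexHull]
    exact convexHull_mono (Set.image_subset_iff.2 fun x hx => Set.mem_image2_of_mem hx hy)
  rintro _ ⟨x, hx, y, hy, rfl⟩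
  have right : (B x) '' convexHull 𝕜 t ⊆ convexHull 𝕜 (Set.image2 (fun x y => B x y) s t) := by
    rw [LinearMap.image_convexHull]
    exact convexHull_min (Set.image_subset_iff.2 fun y hy => left y hy ⟨x, hx, rfl⟩)
      (convex_convexHull 𝕜 _)
  exact right ⟨y, hy, rfl⟩

def pureStates (n : Type*) [Fintype n] : Set (Matrix n n ℂ) :=
  {ρ | ∃ v : n → ℂ, star v ⬝ᵥ v = 1 ∧ vecMulVec v (star v) = ρ}

section PureStates

variable {n : Type*} [Fintype n]

theorem trace_mul_vecMulVec_star (X : Matrix n n ℂ) (u : n → ℂ) :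
    (X * vecMulVec u (star u)).trace = star u ⬝ᵥ (X *ᵥ u) := by
  rw [mul_vecMulVec, trace_vecMulVec, dotProduct_comm]

theorem exists_mem_pureStates_smul_eq (hn : (pureStates n).Nonempty) (v : n → ℂ) :
    ∃ ρ ∈ pureStates n, (star v ⬝ᵥ v).re • ρ = vecMulVec v (star v) := by
  by_cases hv : v = 0
  · obtain ⟨ρ, hρ⟩ := hn
    exact ⟨ρ, hρ, by simp [hv]⟩
  set r := (star v ⬝ᵥ v).re
  have hr_eq : (r : ℂ) = star v ⬝ᵥ v := Complex.ext rfl <| by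
    rw [Complex.ofReal_im, (Complex.nonneg_iff.1 (dotProduct_star_self_nonneg v)).2]
  have hr : 0 < r := by exact_mod_cast hr_eq ▸ dotProduct_star_self_pos_iff.2 hv
  set u := (Real.sqrt r)⁻¹ • v
  have hsq : (Real.sqrt r)⁻¹ * (Real.sqrt r)⁻¹ = r⁻¹ := by
    rw [← mul_inv, Real.mul_self_sqrt hr.le]
  refine ⟨vecMulVec u (star u), ⟨u, ?_, rfl⟩, ?_⟩
  · simp only [u, star_smul, star_trivial, smul_dotProduct, dotProduct_smul, ← hr_eq,
      Complex.real_smul]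
    exact_mod_cast (by rw [← mul_assoc, hsq, inv_mul_cancel₀ hr.ne'] :
      (Real.sqrt r)⁻¹ * ((Real.sqrt r)⁻¹ * r) = 1)
  · simp only [u, star_smul, star_trivial, smul_vecMulVec, vecMulVec_smul, smul_smul]
    rw [hsq, mul_inv_cancel₀ hr.ne', one_smul]

end PureStates

theorem isDensity_vecMulVec_star {n : ℕ} {v : Fin n → ℂ} (hv : star v ⬝ᵥ v = 1) :
    IsDensity (vecMulVec v (star v)) :=
  ⟨posSemidef_vecMulVec_self_star v, by rw [trace_vecMulVec, dotProduct_comm, hv]⟩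

theorem IsDensity.pureStates_nonempty {n : ℕ} {ρ : Matrix (Fin n) (Fin n) ℂ}
    (hρ : IsDensity ρ) : (pureStates (Fin n)).Nonempty := by
  obtain _ | n := n
  · simpa [Matrix.trace] using hρ.2
  · exact ⟨_, Pi.single 0 1, by simp, rfl⟩

theorem IsDensity.mem_convexHull_pureStates {n : ℕ} {ρ : Matrix (Fin n) (Fin n) ℂ}
    (hρ : IsDensity ρ) : ρ ∈ convexHull ℝ (pureStates (Fin n)) := by
  obtain ⟨m, v, rfl⟩ := posSemidef_iff_eq_sum_vecMulVec.1 hρ.1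
  choose σ hσ hσv using fun i => exists_mem_pureStates_smul_eq hρ.pureStates_nonempty (v i)
  refine mem_convexHull_of_exists_fintype (fun i => (star (v i) ⬝ᵥ v i).re) σ (fun i => ?_) ?_ hσ
    (Finset.sum_congr rfl fun i _ => hσv i)
  · exact (Complex.nonneg_iff.1 (dotProduct_star_self_nonneg (v i))).1
  · have htr := hρ.2
    rw [trace_sum] at htr
    simp only [trace_vecMulVec, dotProduct_comm (v _)] at htr
    rw [← Complex.re_sum, htr, Complex.one_re]

theorem vecMulVec_kronecker_vecMulVec {K M : ℕ} (a b : Fin K → ℂ) (c d : Fin M → ℂ) :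
    vecMulVec a b ⊗ₖ vecMulVec c d = vecMulVec (prodVec a c) (prodVec b d) := by
  ext ⟨i, j⟩ ⟨k, l⟩
  simp only [kronecker_apply, vecMulVec_apply, prodVec]
  ring

theorem star_prodVec {K M : ℕ} (x : Fin K → ℂ) (y : Fin M → ℂ) :
    star (prodVec x y) = prodVec (star x) (star y) :=
  funext fun _ => star_mul' _ _

theorem trace_mul_kronecker_vecMulVec_star {K M : ℕ}
    (X : Matrix (Fin K × Fin M) (Fin K × Fin M) ℂ) (x : Fin K → ℂ) (y : Fin M → ℂ) :
    (X * (vecMulVec x (star x) ⊗ₖ vecMulVec y (star y))).trace =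
      star (prodVec x y) ⬝ᵥ (X *ᵥ prodVec x y) := by
  rw [vecMulVec_kronecker_vecMulVec, ← star_prodVec, trace_mul_vecMulVec_star]

theorem trace_mul_sum_ofReal_smul {n ι : Type*} [Fintype n] [Fintype ι] (X : Matrix n n ℂ)
    (p : ι → ℝ) (ρ : ι → Matrix n n ℂ) :
    (X * ∑ i, (p i : ℂ) • ρ i).trace = ∑ i, p i • (X * ρ i).trace := by
  simp only [Matrix.mul_sum, trace_sum, Matrix.mul_smul, trace_smul, Complex.coe_smul]

theorem trace_mul_kronecker_mem_convexHull_pnr {K M : ℕ}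
    (X : Matrix (Fin K × Fin M) (Fin K × Fin M) ℂ) {ρA : Matrix (Fin K) (Fin K) ℂ}
    {ρB : Matrix (Fin M) (Fin M) ℂ} (hA : IsDensity ρA) (hB : IsDensity ρB) :
    (X * (ρA ⊗ₖ ρB)).trace ∈ convexHull ℝ (pnr X) := by
  let B := (kroneckerBilinear (R := ℝ)).compr₂
    ((traceLinearMap (Fin K × Fin M) ℝ ℂ) ∘ₗ LinearMap.mulLeft ℝ X)
  have hpure : Set.image2 (fun σA σB => B σA σB) (pureStates (Fin K)) (pureStates (Fin M)) ⊆
      pnr X := by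
    rintro _ ⟨_, ⟨x, hx, rfl⟩, _, ⟨y, hy, rfl⟩, rfl⟩
    exact ⟨x, y, hx, hy, (trace_mul_kronecker_vecMulVec_star X x y).symm⟩
  exact convexHull_mono hpure <| image2_convexHull_subset_convexHull_image2 B _ _
    ⟨ρA, hA.mem_convexHull_pureStates, ρB, hB.mem_convexHull_pureStates, rfl⟩

/-- Separable numerical range equals the convex hull of product numerical range. -/
theorem sepRange_eq_convexHull_pnr {K M : ℕ}
    (X : Matrix (Fin K × Fin M) (Fin K × Fin M) ℂ) :
    sepRange X = convexHull ℝ (pnr X) := by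
  apply Set.Subset.antisymm
  · rintro _ ⟨n, p, ρA, ρB, hp₀, hp₁, hA, hB, rfl⟩
    rw [trace_mul_sum_ofReal_smul]
    exact (convex_convexHull ℝ _).sum_mem (fun i _ => hp₀ i) hp₁
      fun i _ => trace_mul_kronecker_mem_convexHull_pnr X (hA i) (hB i)
  · intro _ h
    obtain ⟨n, w, z, hw₀, hw₁, hz, rfl⟩ := mem_convexHull_iff_exists_fin.1 h
    choose x y hx hy hxy using hz
    refine ⟨n, w, fun i => vecMulVec (x i) (star (x i)), fun i => vecMulVec (y i) (star (y i)),
      hw₀, hw₁, fun i => isDensity_vecMulVec_star (hx i), fun i => isDensity_vecMulVec_star (hy i),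
      ?_⟩
    simp only [trace_mul_sum_ofReal_smul, trace_mul_kronecker_vecMulVec_star, hxy]
end
end

section
/- A linear map Φ from operators on ℂ^K to operators on ℂ^M is positive (maps positive semidefinite matrices to positive semidefinite matrices) if and only if the product numerical range of its Choi matrix D_Φ is contained in [0, ∞). -/
/-!
At a product vector `x ⊗ y` the quadratic form of the Choi matrix is
`⟨x ⊗ y, D_Φ (x ⊗ y)⟩ = (1/K) ⟨x, Φ(ȳ ȳ*) x⟩`. Rescaling `x` and `y` multiplies it by a positive
number, so the product numerical range lies in `[0, ∞)` iff every `Φ(ȳ ȳ*)` has a nonnegative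
quadratic form, i.e. (over `ℂ`, where this forces hermiticity) is positive semidefinite. Since
every positive semidefinite matrix is a sum of rank-one matrices `v v*`, this is positivity of `Φ`.
-/

open Matrix Kronecker
open scoped Pointwise ComplexOrder

noncomputable section

/-- The (normalized) Choi matrix `D_Φ = (Φ ⊗ 1)|Ψ₊⟩⟨Ψ₊|` of a linear map on matrices,
so that `⟨k⊗i| D_Φ |l⊗j⟩ = (1/K)·⟨k| Φ(|i⟩⟨j|) |l⟩`. -/
def choi {K M : ℕ}
    (Φ : Matrix (Fin K) (Fin K) ℂ →ₗ[ℂ] Matrix (Fin M) (Fin M) ℂ) :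
    Matrix (Fin M × Fin K) (Fin M × Fin K) ℂ :=
  Matrix.of fun p q => ((K : ℂ))⁻¹ * Φ (Matrix.single p.2 q.2 1) p.1 q.1

lemma Matrix.posSemidef_iff_forall_dotProduct_mulVec_nonneg {n : Type*} [Fintype n]
    [DecidableEq n] {A : Matrix n n ℂ} :
    A.PosSemidef ↔ ∀ x, 0 ≤ star x ⬝ᵥ (A *ᵥ x) := by
  refine ⟨fun hA => hA.dotProduct_mulVec_nonneg, fun h => .of_dotProduct_mulVec_nonneg ?_ h⟩
  rw [← isSymmetric_toEuclideanLin_iff, LinearMap.isSymmetric_iff_inner_map_self_real]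
  intro v
  have him := (Complex.nonneg_iff.mp (h v.ofLp)).2
  rw [EuclideanSpace.inner_eq_star_dotProduct, ofLp_toLpLin, toLin'_apply, dotProduct_star,
    dotProduct_comm, Complex.conj_eq_iff_im]
  simp [← him]

lemma LinearMap.posSemidef_map_iff_vecMulVec {𝕜 n m : Type*} [RCLike 𝕜] [Finite n]
    [Fintype m] (Φ : Matrix n n 𝕜 →ₗ[𝕜] Matrix m m 𝕜) :
    (∀ ρ, ρ.PosSemidef → (Φ ρ).PosSemidef) ↔
      ∀ v : n → 𝕜, (Φ (vecMulVec (star v) v)).PosSemidef := by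
  refine ⟨fun h v => h _ (posSemidef_vecMulVec_star_self v), fun h ρ hρ => ?_⟩
  obtain ⟨k, v, rfl⟩ := posSemidef_iff_eq_sum_vecMulVec.mp hρ
  rw [map_sum]
  exact posSemidef_sum _ fun i _ => by simpa using h (star (v i))

lemma LinearMap.matrix_apply_eq_sum_single {R m n : Type*} [CommSemiring R] [Fintype n]
    [DecidableEq n] (Φ : Matrix n n R →ₗ[R] Matrix m m R) (A : Matrix n n R) (k l : m) :
    Φ A k l = ∑ i, ∑ j, A i j * Φ (Matrix.single i j 1) k l := by
  conv_lhs => rw [matrix_eq_sum_single A]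
  simp only [map_sum, Matrix.sum_apply]
  refine Finset.sum_congr rfl fun i _ => Finset.sum_congr rfl fun j _ => ?_
  rw [show Matrix.single i j (A i j) = A i j • Matrix.single i j 1 by
      rw [Matrix.smul_single, smul_eq_mul, mul_one],
    map_smul, Matrix.smul_apply, smul_eq_mul]

lemma star_smul_dotProduct_mulVec_smul {R n : Type*} [CommRing R] [StarRing R] [Fintype n]
    (A : Matrix n n R) (c : R) (v : n → R) :
    star (c • v) ⬝ᵥ (A *ᵥ (c • v)) = star c * c * (star v ⬝ᵥ (A *ᵥ v)) := by
  rw [mulVec_smul, dotProduct_smul, star_smul, smul_dotProduct, smul_eq_mul, smul_eq_mul,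
    mul_left_comm, mul_assoc]

lemma exists_star_smul_dotProduct_smul_eq_one {n : Type*} [Fintype n] {v : n → ℂ}
    (hv : v ≠ 0) : ∃ c : ℂ, c ≠ 0 ∧ star (c • v) ⬝ᵥ (c • v) = 1 := by
  obtain ⟨hre, him⟩ := Complex.nonneg_iff.mp (dotProduct_star_self_nonneg v)
  set r := (star v ⬝ᵥ v).re
  have hr : 0 < r := hre.lt_of_ne fun h => hv <| dotProduct_star_self_eq_zero.mp <|
    Complex.ext h.symm him.symm
  have hvr : star v ⬝ᵥ v = r := Complex.ext rfl him.symm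
  refine ⟨((√r)⁻¹ : ℝ), by simp [(Real.sqrt_pos.mpr hr).ne'], ?_⟩
  rw [star_smul, smul_dotProduct, dotProduct_smul, hvr, smul_eq_mul, smul_eq_mul,
    Complex.star_def, Complex.conj_ofReal, ← mul_assoc, ← Complex.ofReal_mul,
    ← Complex.ofReal_mul, ← mul_inv, Real.mul_self_sqrt hr.le, inv_mul_cancel₀ hr.ne',
    Complex.ofReal_one]

lemma prodVec_smul {K M : ℕ} (c d : ℂ) (x : Fin K → ℂ) (y : Fin M → ℂ) :
    prodVec (c • x) (d • y) = (c * d) • prodVec x y := by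
  ext p
  simp only [prodVec, Pi.smul_apply, smul_eq_mul]
  ring

lemma pnr_subset_iff_forall_nonneg {K M : ℕ} (X : Matrix (Fin K × Fin M) (Fin K × Fin M) ℂ) :
    pnr X ⊆ {z : ℂ | 0 ≤ z.re ∧ z.im = 0} ↔
      ∀ x y, 0 ≤ star (prodVec x y) ⬝ᵥ (X *ᵥ prodVec x y) := by
  have hIci : {z : ℂ | 0 ≤ z.re ∧ z.im = 0} = Set.Ici 0 := by
    ext z
    simp [Complex.nonneg_iff, eq_comm]
  rw [hIci]
  refine ⟨fun h x y => ?_, fun h z ⟨x, y, _, _, hz⟩ => hz ▸ h x y⟩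
  by_cases hxy : x = 0 ∨ y = 0
  · have : prodVec x y = 0 := by rcases hxy with rfl | rfl <;> ext <;> simp [prodVec]
    simp [this]
  rw [not_or] at hxy
  obtain ⟨c, hc, hcx⟩ := exists_star_smul_dotProduct_smul_eq_one hxy.1
  obtain ⟨d, hd, hdy⟩ := exists_star_smul_dotProduct_smul_eq_one hxy.2
  have hcd : 0 < star (c * d) * (c * d) := star_mul_self_pos (.of_ne_zero (mul_ne_zero hc hd))
  have := h ⟨c • x, d • y, hcx, hdy, rfl⟩
  rw [prodVec_smul, star_smul_dotProduct_mulVec_smul] at this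
  exact le_of_mul_le_mul_left (by rwa [mul_zero]) hcd

lemma dotProduct_prodVec_choi_mulVec {K M : ℕ}
    (Φ : Matrix (Fin K) (Fin K) ℂ →ₗ[ℂ] Matrix (Fin M) (Fin M) ℂ)
    (x : Fin M → ℂ) (y : Fin K → ℂ) :
    star (prodVec x y) ⬝ᵥ (choi Φ *ᵥ prodVec x y)
      = (K : ℂ)⁻¹ * (star x ⬝ᵥ (Φ (vecMulVec (star y) y) *ᵥ x)) := by
  simp only [dotProduct, mulVec, choi, prodVec, of_apply, Fintype.sum_prod_type,
    Φ.matrix_apply_eq_sum_single (vecMulVec (star y) y), vecMulVec_apply, Finset.mul_sum,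
    Finset.sum_mul, Pi.star_apply, star_mul]
  refine Finset.sum_congr rfl fun k _ => ?_
  rw [Finset.sum_comm]
  refine Finset.sum_congr rfl fun l _ => Finset.sum_congr rfl fun i _ =>
    Finset.sum_congr rfl fun j _ => ?_
  ring

/-- A linear map on matrices is positive iff the product numerical range of its Choi
matrix is contained in `[0, ∞)`. -/
theorem positive_iff_pnr_choi_nonneg {K M : ℕ} (hK : 0 < K)
    (Φ : Matrix (Fin K) (Fin K) ℂ →ₗ[ℂ] Matrix (Fin M) (Fin M) ℂ) :
    (∀ ρ : Matrix (Fin K) (Fin K) ℂ, ρ.PosSemidef → (Φ ρ).PosSemidef) ↔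
      pnr (choi Φ) ⊆ {z : ℂ | 0 ≤ z.re ∧ z.im = 0} := by
  have hKinv : ∀ q : ℂ, 0 ≤ (K : ℂ)⁻¹ * q ↔ 0 ≤ q := fun q => by
    simpa using mul_le_mul_iff_right₀ (b := 0) (c := q) (by positivity : (0 : ℂ) < (K : ℂ)⁻¹)
  rw [Φ.posSemidef_map_iff_vecMulVec, pnr_subset_iff_forall_nonneg, forall_comm]
  simp_rw [dotProduct_prodVec_choi_mulVec, hKinv, posSemidef_iff_forall_dotProduct_mulVec_nonneg]
end
end

section
/- Let |φ⟩ and |ψ⟩ be unit vectors in ℂ^N ⊗ ℂ^N with Schmidt coefficient vectors λ and μ. Then for any unitaries U_A, U_B on ℂ^N, the overlap satisfies |⟨ψ| U_A ⊗ U_B |φ⟩|² ≤ (Σ_{j=1}^N √(λ_j^↓ μ_j^↓))², where ↓ denotes decreasing order. -/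
open Matrix Kronecker
open scoped Pointwise ComplexOrder

noncomputable section

/-- An orthonormal family of vectors in `ℂ^N`. -/
def OrthonormalFam {N : ℕ} (e : Fin N → (Fin N → ℂ)) : Prop :=
  ∀ i j, star (e i) ⬝ᵥ e j = if i = j then 1 else 0

/-- `φ` admits a Schmidt decomposition with Schmidt coefficients `lam`. -/
def HasSchmidt {N : ℕ} (φ : Fin N × Fin N → ℂ) (lam : Fin N → ℝ) : Prop :=
  ∃ e f : Fin N → (Fin N → ℂ), OrthonormalFam e ∧ OrthonormalFam f ∧
    φ = ∑ i, ((Real.sqrt (lam i) : ℂ)) • prodVec (e i) (f i)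

/-!
Write `φ = ∑ √λᵢ eᵢ ⊗ fᵢ` and `ψ = ∑ √μⱼ gⱼ ⊗ hⱼ`. Then
`⟨ψ| U ⊗ V |φ⟩ = ∑ⱼ ∑ᵢ √μⱼ √λᵢ Aⱼᵢ Bⱼᵢ`, where `Aⱼᵢ = ⟨gⱼ| U |eᵢ⟩` and `Bⱼᵢ = ⟨hⱼ| V |fᵢ⟩` are
unitary matrices. By AM-GM, `|Aⱼᵢ Bⱼᵢ| ≤ (|Aⱼᵢ|² + |Bⱼᵢ|²) / 2`, and the matrices `(|Aⱼᵢ|²)` and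
`(|Bⱼᵢ|²)` are doubly stochastic. By Birkhoff's theorem a doubly stochastic matrix is a convex
combination of permutation matrices, and for similarly ordered vectors `x, y` the rearrangement
inequality gives `∑ⱼ xⱼ y_{σ j} ≤ ∑ⱼ xⱼ yⱼ`; hence the overlap is at most `∑ⱼ √μⱼ √λⱼ`.
-/

open Finset

section DoublyStochastic

variable {R n : Type*} [Fintype n] [DecidableEq n] [Field R] [LinearOrder R] [IsStrictOrderedRing R]

theorem Monovary.dotProduct_mulVec_le_of_mem_doublyStochastic {f g : n → R} {M : Matrix n n R}
    (hfg : Monovary f g) (hM : M ∈ doublyStochastic R n) : f ⬝ᵥ (M *ᵥ g) ≤ f ⬝ᵥ g := by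
  have hM' : M ∈ convexHull R {σ.permMatrix R | σ : Equiv.Perm n} := by
    rwa [← doublyStochastic_eq_convexHull_permMatrix]
  refine convexHull_min (t := {M' | f ⬝ᵥ (M' *ᵥ g) ≤ f ⬝ᵥ g}) ?_
    (convex_halfSpace_le ?_ (f ⬝ᵥ g)) hM'
  · rintro _ ⟨σ, rfl⟩
    simpa [permMatrix_mulVec, dotProduct] using hfg.sum_mul_comp_perm_le_sum_mul
  · exact ⟨fun M N => by simp [add_mulVec, dotProduct_add],
      fun c M => by simp [smul_mulVec, dotProduct_smul]⟩

end DoublyStochastic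

section Unitary

variable {𝕜 n : Type*} [RCLike 𝕜] [Fintype n] [DecidableEq n] {A B : Matrix n n 𝕜}

theorem sum_norm_sq_row_of_mem_unitaryGroup (hA : A ∈ unitaryGroup n 𝕜) (i : n) :
    ∑ j, ‖A i j‖ ^ 2 = 1 := by
  have hdiag : (A * star A) i i = ((∑ j, ‖A i j‖ ^ 2 : ℝ) : 𝕜) := by
    simp only [mul_apply, star_apply, ← starRingEnd_apply, RCLike.mul_conj]
    norm_cast
  rw [Unitary.mul_star_self_of_mem hA, one_apply_eq] at hdiag
  exact_mod_cast hdiag.symm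

theorem sum_norm_sq_col_of_mem_unitaryGroup (hA : A ∈ unitaryGroup n 𝕜) (j : n) :
    ∑ i, ‖A i j‖ ^ 2 = 1 := by
  simpa using sum_norm_sq_row_of_mem_unitaryGroup (Unitary.star_mem hA) j

theorem norm_sq_mem_doublyStochastic (hA : A ∈ unitaryGroup n 𝕜) :
    Matrix.of (fun i j => ‖A i j‖ ^ 2) ∈ doublyStochastic ℝ n :=
  mem_doublyStochastic_iff_sum.2 ⟨fun _ _ => sq_nonneg _,
    sum_norm_sq_row_of_mem_unitaryGroup hA, sum_norm_sq_col_of_mem_unitaryGroup hA⟩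

theorem Monovary.sum_mul_norm_sq_le_of_mem_unitaryGroup {x y : n → ℝ} (hxy : Monovary x y)
    (hA : A ∈ unitaryGroup n 𝕜) : ∑ j, ∑ i, x j * y i * ‖A j i‖ ^ 2 ≤ ∑ i, x i * y i := by
  simpa [dotProduct, mulVec, mul_sum, mul_assoc, mul_comm, mul_left_comm] using
    hxy.dotProduct_mulVec_le_of_mem_doublyStochastic (norm_sq_mem_doublyStochastic hA)

theorem Monovary.norm_sum_mul_entries_le_of_mem_unitaryGroup {x y : n → ℝ} (hx : ∀ j, 0 ≤ x j)
    (hy : ∀ i, 0 ≤ y i) (hxy : Monovary x y) (hA : A ∈ unitaryGroup n 𝕜)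
    (hB : B ∈ unitaryGroup n 𝕜) :
    ‖∑ j, ∑ i, (x j : 𝕜) * y i * (A j i * B j i)‖ ≤ ∑ i, x i * y i :=
  calc ‖∑ j, ∑ i, (x j : 𝕜) * y i * (A j i * B j i)‖
      ≤ ∑ j, ∑ i, x j * y i * (‖A j i‖ * ‖B j i‖) := by
        refine (norm_sum_le _ _).trans (sum_le_sum fun j _ => (norm_sum_le _ _).trans_eq ?_)
        simp [norm_mul, abs_of_nonneg (hx j), abs_of_nonneg (hy _)]
    _ ≤ ∑ j, ∑ i, x j * y i * ((‖A j i‖ ^ 2 + ‖B j i‖ ^ 2) / 2) :=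
        sum_le_sum fun j _ => sum_le_sum fun i _ => mul_le_mul_of_nonneg_left
          (by linarith [two_mul_le_add_sq ‖A j i‖ ‖B j i‖]) (mul_nonneg (hx j) (hy i))
    _ = ((∑ j, ∑ i, x j * y i * ‖A j i‖ ^ 2) + ∑ j, ∑ i, x j * y i * ‖B j i‖ ^ 2) / 2 := by
        simp only [mul_add, add_div, sum_add_distrib, sum_div, mul_div_assoc]
    _ ≤ ((∑ i, x i * y i) + ∑ i, x i * y i) / 2 := by
        gcongr (?_ + ?_) / 2
        exacts [hxy.sum_mul_norm_sq_le_of_mem_unitaryGroup hA,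
          hxy.sum_mul_norm_sq_le_of_mem_unitaryGroup hB]
    _ = ∑ i, x i * y i := add_self_div_two _

end Unitary

section TensorProduct

variable {K K' M M' : ℕ}

theorem kronecker_mulVec_prodVec (U : Matrix (Fin K) (Fin K') ℂ) (V : Matrix (Fin M) (Fin M') ℂ)
    (x : Fin K' → ℂ) (y : Fin M' → ℂ) :
    (U ⊗ₖ V) *ᵥ prodVec x y = prodVec (U *ᵥ x) (V *ᵥ y) := by
  ext ⟨k, l⟩
  simp only [mulVec, dotProduct, prodVec, kroneckerMap_apply, Fintype.sum_prod_type,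
    sum_mul_sum]
  exact sum_congr rfl fun i _ => sum_congr rfl fun j _ => by ring

theorem star_prodVec_dotProduct_prodVec (a c : Fin K → ℂ) (b d : Fin M → ℂ) :
    star (prodVec a b) ⬝ᵥ prodVec c d = (star a ⬝ᵥ c) * (star b ⬝ᵥ d) := by
  simp only [dotProduct, prodVec, Pi.star_apply, star_mul', Fintype.sum_prod_type, sum_mul_sum]
  exact sum_congr rfl fun i _ => sum_congr rfl fun j _ => by ring

theorem star_dotProduct_kronecker_mulVec_eq_sum {ι κ : Type*} [Fintype ι] [Fintype κ]
    {φ : Fin K' × Fin M' → ℂ} {ψ : Fin K × Fin M → ℂ} {c : ι → ℂ} {e : ι → Fin K' → ℂ}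
    {f : ι → Fin M' → ℂ} {d : κ → ℂ} {g : κ → Fin K → ℂ} {h : κ → Fin M → ℂ}
    (hφ : φ = ∑ i, c i • prodVec (e i) (f i)) (hψ : ψ = ∑ j, d j • prodVec (g j) (h j))
    (U : Matrix (Fin K) (Fin K') ℂ) (V : Matrix (Fin M) (Fin M') ℂ) :
    star ψ ⬝ᵥ ((U ⊗ₖ V) *ᵥ φ) =
      ∑ j, ∑ i, star (d j) * c i * ((star (g j) ⬝ᵥ (U *ᵥ e i)) * (star (h j) ⬝ᵥ (V *ᵥ f i))) := by
  simp only [hφ, hψ, mulVec_sum, mulVec_smul, kronecker_mulVec_prodVec, star_sum, sum_dotProduct,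
    dotProduct_sum, star_smul, smul_dotProduct, dotProduct_smul, star_prodVec_dotProduct_prodVec,
    smul_eq_mul, mul_sum]
  rw [sum_comm]
  exact sum_congr rfl fun j _ => sum_congr rfl fun i _ => by ring

end TensorProduct

section Orthonormal

variable {N : ℕ} {e g : Fin N → Fin N → ℂ}

theorem OrthonormalFam.transpose_of_mem_unitaryGroup (he : OrthonormalFam e) :
    (Matrix.of e)ᵀ ∈ unitaryGroup (Fin N) ℂ := by
  rw [mem_unitaryGroup_iff']
  ext i j
  simpa [mul_apply, dotProduct, one_apply] using he i j

theorem OrthonormalFam.of_star_dotProduct_mulVec_mem_unitaryGroup (hg : OrthonormalFam g)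
    (he : OrthonormalFam e) {U : Matrix (Fin N) (Fin N) ℂ} (hU : U ∈ unitaryGroup (Fin N) ℂ) :
    Matrix.of (fun j i => star (g j) ⬝ᵥ (U *ᵥ e i)) ∈ unitaryGroup (Fin N) ℂ := by
  have hmat : Matrix.of (fun j i => star (g j) ⬝ᵥ (U *ᵥ e i)) =
      star (Matrix.of g)ᵀ * U * (Matrix.of e)ᵀ := by
    ext j i
    simp only [dotProduct, Pi.star_apply, RCLike.star_def, mulVec, mul_sum, of_apply, mul_apply,
      star_apply, transpose_apply, sum_mul, mul_assoc]
    exact sum_comm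
  rw [hmat]
  exact mul_mem (mul_mem (Unitary.star_mem hg.transpose_of_mem_unitaryGroup) hU)
    he.transpose_of_mem_unitaryGroup

end Orthonormal

theorem overlap_le_schmidt_fidelity_general {N : ℕ}
    (φ ψ : Fin N × Fin N → ℂ) (lam mu : Fin N → ℝ)
    (hl0 : ∀ i, 0 ≤ lam i)
    (hld : Antitone lam) (hmd : Antitone mu)
    (hφ : HasSchmidt φ lam) (hψ : HasSchmidt ψ mu)
    (U V : Matrix (Fin N) (Fin N) ℂ)
    (hU : U ∈ Matrix.unitaryGroup (Fin N) ℂ) (hV : V ∈ Matrix.unitaryGroup (Fin N) ℂ) :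
    ‖star ψ ⬝ᵥ ((U ⊗ₖ V) *ᵥ φ)‖ ^ 2 ≤
      (∑ j, Real.sqrt (lam j * mu j)) ^ 2 := by
  obtain ⟨e, f, he, hf, hφe⟩ := hφ
  obtain ⟨g, h, hg, hh, hψg⟩ := hψ
  have hsqrt : Monovary (fun j => √(mu j)) (fun i => √(lam i)) :=
    (Real.sqrt_monotone.comp_antitone hmd).monovary (Real.sqrt_monotone.comp_antitone hld)
  have hbound := hsqrt.norm_sum_mul_entries_le_of_mem_unitaryGroup (fun _ => Real.sqrt_nonneg _)
    (fun _ => Real.sqrt_nonneg _) (hg.of_star_dotProduct_mulVec_mem_unitaryGroup he hU)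
    (hh.of_star_dotProduct_mulVec_mem_unitaryGroup hf hV)
  rw [star_dotProduct_kronecker_mulVec_eq_sum hφe hψg]
  simp only [Complex.star_def, Complex.conj_ofReal]
  refine pow_le_pow_left₀ (norm_nonneg _) (hbound.trans_eq ?_) 2
  exact sum_congr rfl fun j _ => by rw [Real.sqrt_mul (hl0 j), mul_comm]

/-- Overlap bound: `|⟨ψ| U_A ⊗ U_B |φ⟩|² ≤ (Σ_j √(λ_j^↓ μ_j^↓))²` for unit vectors with
Schmidt coefficient vectors `lam`, `mu` sorted in decreasing order. -/
theorem overlap_le_schmidt_fidelity {N : ℕ}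
    (φ ψ : Fin N × Fin N → ℂ) (lam mu : Fin N → ℝ)
    (hl0 : ∀ i, 0 ≤ lam i) (hm0 : ∀ i, 0 ≤ mu i)
    (hl1 : ∑ i, lam i = 1) (hm1 : ∑ i, mu i = 1)
    (hld : Antitone lam) (hmd : Antitone mu)
    (hφ : HasSchmidt φ lam) (hψ : HasSchmidt ψ mu)
    (U V : Matrix (Fin N) (Fin N) ℂ)
    (hU : U ∈ Matrix.unitaryGroup (Fin N) ℂ) (hV : V ∈ Matrix.unitaryGroup (Fin N) ℂ) :
    ‖star ψ ⬝ᵥ ((U ⊗ₖ V) *ᵥ φ)‖ ^ 2 ≤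
      (∑ j, Real.sqrt (lam j * mu j)) ^ 2 :=
  overlap_le_schmidt_fidelity_general φ ψ lam mu hl0 hld hmd hφ hψ U V hU hV
end
end
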